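/- arXiv:1008.2457 — 9 statements merged into one kernel-verified Lean document; each statement's English description precedes it below -/
import Mathlib

section
/- Let f : ℝ² → ℝ be twice continuously differentiable, and let E be a subset of ℝ² such that the gradient of f vanishes at every point of E. Then the image f(E) has one-dimensional Lebesgue measure zero. -/
/-!
Split `E` according to whether the Hessian `D²f` vanishes.

Where it vanishes, Taylor's formula and uniform continuity of `D²f` on compact sets make `f`
`ε`-Hölder of exponent `2` on all small balls, so `μH¹` of the image of a bounded piece is at most
`ε · μH²` of that piece for every `ε > 0`, hence zero.

Near a point `p` with `D²f p ≠ 0`, some directional derivative `h = ∂ᵥf` has nonzero differential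
at `p` and vanishes on `E`. By the strict differentiability of `h`, the set `E` then lies near `p`
on a Lipschitz graph over a line, i.e. it is parametrised by a Lipschitz map `γ` from a subset of
`ℝ`. The function `f ∘ γ` has zero derivative on that set, so its image is null by the
one-dimensional Sard lemma.

Both statements are local, and second countability of the plane makes them global.
-/

open MeasureTheory Set Metric Filter Topology Bornology
open scoped NNReal ENNReal

theorem measure_image_null_of_locally_null {α β : Type*} [TopologicalSpace α]
    [SecondCountableTopology α] [MeasurableSpace β] (μ : Measure β) (f : α → β) (s : Set α)
    (hs : ∀ x ∈ s, ∃ u ∈ 𝓝[s] x, μ (f '' u) = 0) : μ (f '' s) = 0 := by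
  simpa using measure_null_of_locally_null (μ := OuterMeasure.comap f μ.toOuterMeasure) s
    (by simpa using hs)

theorem hausdorffMeasure_image_eq_zero_of_forall_holderOnWith_ball {X Y : Type*} [MetricSpace X]
    [TopologicalSpace.SeparableSpace X] [MeasurableSpace X] [BorelSpace X] [EMetricSpace Y]
    [MeasurableSpace Y] [BorelSpace Y] {f : X → Y} {s : Set X} {r : ℝ≥0} {d : ℝ} (hr : 0 < r)
    (hd : 0 < d) (hs : μH[r * d] s ≠ ∞)
    (hf : ∀ ε : ℝ≥0, 0 < ε → ∃ δ > 0, ∀ c, HolderOnWith ε r f (s ∩ ball c δ)) :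
    μH[d] (f '' s) = 0 := by
  have hle : ∀ ε : ℝ≥0, 0 < ε → μH[d] (f '' s) ≤ (ε : ℝ≥0∞) ^ d * μH[r * d] s := by
    intro ε hε
    obtain ⟨δ, hδ, hδf⟩ := hf ε hε
    rcases isEmpty_or_nonempty X with _ | _
    · simp [Set.eq_empty_of_isEmpty s]
    set t := disjointed fun n => ball (TopologicalSpace.denseSeq X n) δ
    have ht_meas : ∀ n, MeasurableSet (t n) := MeasurableSet.disjointed fun n => measurableSet_ball
    have ht_cover : ⋃ n, t n = univ := by
      refine iUnion_disjointed.trans (eq_univ_of_forall fun x => ?_)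
      obtain ⟨n, hn⟩ := denseRange_iff.1 (TopologicalSpace.denseRange_denseSeq X) x δ hδ
      exact mem_iUnion.2 ⟨n, hn⟩
    calc μH[d] (f '' s) = μH[d] (⋃ n, f '' (s ∩ t n)) := by
          rw [← image_iUnion, ← inter_iUnion, ht_cover, inter_univ]
      _ ≤ ∑' n, μH[d] (f '' (s ∩ t n)) := measure_iUnion_le _
      _ ≤ ∑' n, (ε : ℝ≥0∞) ^ d * μH[r * d] (s ∩ t n) := ENNReal.tsum_le_tsum fun n =>
          HolderOnWith.hausdorffMeasure_image_le
            ((hδf _).mono (inter_subset_inter_right s (disjointed_subset _ n))) hr hd.le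
      _ = (ε : ℝ≥0∞) ^ d * μH[r * d].restrict s (⋃ n, t n) := by
          rw [ENNReal.tsum_mul_left, measure_iUnion (disjoint_disjointed _) ht_meas]
          exact congrArg _ <| tsum_congr fun n => by
            rw [Measure.restrict_apply (ht_meas n), inter_comm]
      _ = (ε : ℝ≥0∞) ^ d * μH[r * d] s := by rw [ht_cover, Measure.restrict_apply_univ]
  have hlim : Tendsto (fun ε : ℝ≥0 => (ε : ℝ≥0∞) ^ d * μH[r * d] s) (𝓝[>] 0) (𝓝 0) := by
    have hpow : Tendsto (fun ε : ℝ≥0 => (ε : ℝ≥0∞) ^ d) (𝓝[>] 0) (𝓝 0) := by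
      have := ((ENNReal.continuous_rpow_const (y := d)).comp ENNReal.continuous_coe).tendsto 0
      simpa [Function.comp_def, ENNReal.zero_rpow_of_pos hd] using this.mono_left nhdsWithin_le_nhds
    simpa using ENNReal.Tendsto.mul_const hpow (Or.inr hs)
  exact nonpos_iff_eq_zero.1 (ge_of_tendsto hlim (eventually_nhdsWithin_of_forall hle))

section

variable {E F : Type*} [NormedAddCommGroup E] [NormedSpace ℝ E] [NormedAddCommGroup F]
  [NormedSpace ℝ F]

theorem Convex.norm_image_sub_le_of_norm_fderiv_fderiv_le {f : E → F} {s : Set E}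
    (hs : Convex ℝ s) (hf : ∀ z ∈ s, DifferentiableAt ℝ f z)
    (hf' : ∀ z ∈ s, DifferentiableAt ℝ (fderiv ℝ f) z) {C : ℝ}
    (hC : ∀ z ∈ s, ‖fderiv ℝ (fderiv ℝ f) z‖ ≤ C) {x y : E} (hx : x ∈ s) (hy : y ∈ s)
    (hx0 : fderiv ℝ f x = 0) : ‖f y - f x‖ ≤ C * ‖y - x‖ ^ 2 := by
  have hseg : segment ℝ x y ⊆ s := hs.segment_subset hx hy
  have hC0 : 0 ≤ C := (norm_nonneg (fderiv ℝ (fderiv ℝ f) x)).trans (hC x hx)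
  have hDf : ∀ z ∈ segment ℝ x y, ‖fderiv ℝ f z‖ ≤ C * ‖y - x‖ := fun z hz => by
    calc ‖fderiv ℝ f z‖ = ‖fderiv ℝ f z - fderiv ℝ f x‖ := by rw [hx0, sub_zero]
      _ ≤ C * ‖z - x‖ := hs.norm_image_sub_le_of_norm_fderiv_le hf' hC hx (hseg hz)
      _ ≤ C * ‖y - x‖ := by gcongr; exact norm_sub_le_of_mem_segment hz
  calc ‖f y - f x‖ ≤ C * ‖y - x‖ * ‖y - x‖ :=
        (convex_segment x y).norm_image_sub_le_of_norm_fderiv_le (fun z hz => hf z (hseg hz))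
          hDf (left_mem_segment ℝ x y) (right_mem_segment ℝ x y)
    _ = C * ‖y - x‖ ^ 2 := by ring

theorem hausdorffMeasure_image_eq_zero_of_fderiv_fderiv_eq_zero [ProperSpace E]
    [MeasurableSpace E] [BorelSpace E] [MeasurableSpace F] [BorelSpace F] {f : E → F}
    (hf : ContDiff ℝ 2 f) {s : Set E} (hs : IsBounded s) (hs2 : μH[2] s ≠ ∞)
    (h1 : ∀ x ∈ s, fderiv ℝ f x = 0) (h2 : ∀ x ∈ s, fderiv ℝ (fderiv ℝ f) x = 0) :
    μH[1] (f '' s) = 0 := by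
  have hf1 : ContDiff ℝ 1 (fderiv ℝ f) := hf.fderiv_right (by norm_num)
  refine hausdorffMeasure_image_eq_zero_of_forall_holderOnWith_ball (r := 2) two_pos one_pos
    (by simpa using hs2) fun ε hε => ?_
  obtain ⟨δ, hδ, hδε⟩ : ∃ δ > 0, ∀ x ∈ s, ∀ z ∈ ball x δ, ‖fderiv ℝ (fderiv ℝ f) z‖ ≤ ε := by
    obtain ⟨δ, hδ, hδU⟩ := mem_uniformity_dist.1 <|
      hs.isCompact_closure.uniformContinuousAt_of_continuousAt (‖fderiv ℝ (fderiv ℝ f) ·‖)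
        (fun x _ => (hf1.continuous_fderiv one_ne_zero).norm.continuousAt)
        (dist_mem_uniformity hε)
    refine ⟨δ, hδ, fun x hx z hz => ?_⟩
    have : dist ‖fderiv ℝ (fderiv ℝ f) x‖ ‖fderiv ℝ (fderiv ℝ f) z‖ < ε :=
      hδU (mem_ball'.1 hz) (subset_closure hx)
    have h0 : ‖fderiv ℝ (fderiv ℝ f) x‖ = 0 := by
      rw [h2 x hx]; exact ContinuousLinearMap.opNorm_zero
    rw [h0, dist_zero_left] at this
    exact (Real.le_norm_self _).trans this.le
  refine ⟨δ / 2, half_pos hδ, fun c x hx y hy => ?_⟩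
  have hy' : y ∈ ball x δ :=
    mem_ball.2 (by linarith [dist_triangle_right y x c, mem_ball.1 hx.2, mem_ball.1 hy.2])
  have hfxy := (convex_ball x δ).norm_image_sub_le_of_norm_fderiv_fderiv_le
    (fun z _ => hf.differentiable (by norm_num) z) (fun z _ => hf1.differentiable one_ne_zero z)
    (hδε x hx.1) (mem_ball_self hδ) hy' (h1 x hx.1)
  calc edist (f x) (f y) = ENNReal.ofReal ‖f y - f x‖ := by rw [edist_dist, dist_comm, dist_eq_norm]
    _ ≤ ENNReal.ofReal (ε * ‖y - x‖ ^ 2) := ENNReal.ofReal_le_ofReal hfxy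
    _ = ε * edist x y ^ ((2 : ℝ≥0) : ℝ) := by
      rw [ENNReal.ofReal_mul ε.coe_nonneg, ENNReal.ofReal_pow (norm_nonneg _), ← dist_eq_norm,
        dist_comm, ← edist_dist]
      simp

end

section

variable {𝕜 E F G : Type*} [NontriviallyNormedField 𝕜] [NormedAddCommGroup E] [NormedSpace 𝕜 E]
  [NormedAddCommGroup F] [NormedSpace 𝕜 F] [NormedAddCommGroup G] [NormedSpace 𝕜 G]

theorem HasFDerivWithinAt.zero_comp_lipschitzOnWith {f : E → F} {γ : G → E} {s : Set E}
    {t : Set G} {K : ℝ≥0} (hγ : LipschitzOnWith K γ t) (hγst : MapsTo γ t s) {a : G}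
    (ha : a ∈ t) (hf : HasFDerivWithinAt f (0 : E →L[𝕜] F) s (γ a)) :
    HasFDerivWithinAt (f ∘ γ) (0 : G →L[𝕜] F) t a := by
  have hγa : Tendsto γ (𝓝[t] a) (𝓝[s] γ a) :=
    tendsto_nhdsWithin_iff.2 ⟨hγ.continuousOn a ha, eventually_mem_nhdsWithin.mono hγst⟩
  have hγO : (fun b => γ b - γ a) =O[𝓝[t] a] fun b => b - a :=
    Asymptotics.IsBigO.of_bound K <| eventually_mem_nhdsWithin.mono fun b hb => by
      simpa only [dist_eq_norm] using hγ.dist_le_mul b hb a ha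
  refine .of_isLittleO ?_
  simpa [Function.comp_def] using (hf.isLittleO.comp_tendsto hγa).trans_isBigO hγO

theorem HasStrictFDerivAt.exists_mem_nhds_dist_le_of_antilipschitzWith {h : E → F}
    {ℓ : E →L[𝕜] F} {p : E} (hh : HasStrictFDerivAt h ℓ p) {μ : E →L[𝕜] G} {K : ℝ≥0}
    (hK : AntilipschitzWith K (ℓ.prod μ)) :
    ∃ U ∈ 𝓝 p, ∀ x ∈ U, ∀ y ∈ U, h x = h y → dist x y ≤ K * dist (μ x) (μ y) := by
  obtain ⟨U, hU, happrox⟩ := hh.approximates_deriv_on_nhds (c := (K + 1)⁻¹) (Or.inr (by positivity))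
  refine ⟨U, hU, fun x hx y hy hxy => ?_⟩
  set w := x - y
  have hℓ : ‖ℓ w‖ ≤ ((K : ℝ) + 1)⁻¹ * ‖w‖ := by
    have := happrox x hx y hy
    rwa [hxy, sub_self, zero_sub, norm_neg, NNReal.coe_inv, NNReal.coe_add, NNReal.coe_one] at this
  have hw : ‖w‖ ≤ K * max ‖ℓ w‖ ‖μ w‖ := by
    simpa [w, dist_eq_norm, ← map_sub, Prod.norm_def] using hK.le_mul_dist x y
  rw [dist_eq_norm, dist_eq_norm, ← map_sub]
  -- On a level set `‖ℓ w‖ ≤ ‖w‖ / (K + 1)`, so `ℓ w` can only dominate `μ w` when `w = 0`.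
  rcases le_total ‖ℓ w‖ ‖μ w‖ with hμ | hμ
  · rwa [max_eq_right hμ] at hw
  · rw [max_eq_left hμ] at hw
    have : ((K : ℝ) + 1) * ‖w‖ ≤ K * ‖w‖ :=
      calc ((K : ℝ) + 1) * ‖w‖ ≤ (K + 1) * (K * (((K : ℝ) + 1)⁻¹ * ‖w‖)) := by
            gcongr; exact hw.trans (by gcongr)
        _ = K * ‖w‖ := by field_simp
    have : ‖w‖ = 0 := le_antisymm (by linarith) (norm_nonneg w)
    rw [this]
    positivity

end

theorem volume_image_eq_zero_of_hasFDerivWithinAt_zero {E : Type*} [NormedAddCommGroup E]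
    [NormedSpace ℝ E] {f φ : E → ℝ} {s : Set E} {K : ℝ≥0}
    (hφ : ∀ x ∈ s, ∀ y ∈ s, dist x y ≤ K * dist (φ x) (φ y))
    (hf : ∀ x ∈ s, HasFDerivWithinAt f (0 : E →L[ℝ] ℝ) s x) : volume (f '' s) = 0 := by
  have hinj : InjOn φ s := fun x hx y hy hxy =>
    dist_le_zero.1 (by simpa [hxy] using hφ x hx y hy)
  set γ := Function.invFunOn φ s
  have hγφ : LeftInvOn γ φ s := hinj.leftInvOn_invFunOn
  have hγs : MapsTo γ (φ '' s) s := fun _ ht => Function.invFunOn_mem ht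
  have hγ : LipschitzOnWith K γ (φ '' s) := by
    refine LipschitzOnWith.of_dist_le_mul ?_
    rintro _ ⟨x, hx, rfl⟩ _ ⟨y, hy, rfl⟩
    rw [hγφ hx, hγφ hy]
    exact hφ x hx y hy
  rw [← hγφ.image_image, ← image_comp]
  exact addHaar_image_eq_zero_of_det_fderivWithin_eq_zero volume (f' := fun _ => 0)
    (fun t ht => (hf _ (hγs ht)).zero_comp_lipschitzOnWith hγ hγs ht) (fun _ _ => by simp)

theorem exists_antilipschitzWith_prod_of_ne_zero {ℓ : EuclideanSpace ℝ (Fin 2) →L[ℝ] ℝ}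
    (hℓ : ℓ ≠ 0) :
    ∃ (μ : EuclideanSpace ℝ (Fin 2) →L[ℝ] ℝ) (K : ℝ≥0), AntilipschitzWith K (ℓ.prod μ) := by
  obtain ⟨i, hi⟩ : ∃ i, ℓ (EuclideanSpace.single i 1) ≠ 0 := by
    by_contra! h
    exact hℓ (ContinuousLinearMap.coe_injective
      ((EuclideanSpace.basisFun (Fin 2) ℝ).toBasis.ext fun i => by simpa using h i))
  obtain ⟨j, hji⟩ := exists_ne i
  have hinj : Function.Injective (ℓ.prod (EuclideanSpace.proj j)) := by
    rw [← ContinuousLinearMap.coe_coe, ← LinearMap.ker_eq_bot, LinearMap.ker_eq_bot']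
    intro w hw
    have hw_eq : w = w i • EuclideanSpace.single i 1 := by
      ext k
      obtain rfl | rfl : k = i ∨ k = j := by omega
      · simp
      · simpa [hji] using congrArg Prod.snd hw
    have hwi : w i = 0 := by
      have hℓw := congrArg Prod.fst hw
      rw [ContinuousLinearMap.coe_coe, ContinuousLinearMap.prod_apply, hw_eq, map_smul,
        smul_eq_mul] at hℓw
      exact (mul_eq_zero.1 hℓw).resolve_right hi
    rw [hw_eq, hwi, zero_smul]
  obtain ⟨K, -, hK⟩ := (LinearMap.injective_iff_antilipschitz _).1 hinj
  exact ⟨_, K, hK⟩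

theorem volume_image_eq_zero_of_fderiv_fderiv_eq_zero {f : EuclideanSpace ℝ (Fin 2) → ℝ}
    (hf : ContDiff ℝ 2 f) {s : Set (EuclideanSpace ℝ (Fin 2))} (hs : IsBounded s)
    (h1 : ∀ x ∈ s, fderiv ℝ f x = 0) (h2 : ∀ x ∈ s, fderiv ℝ (fderiv ℝ f) x = 0) :
    volume (f '' s) = 0 := by
  have hs2 : μH[2] s ≠ ∞ := by
    simpa using (hs.measure_lt_top (μ := μH[Module.finrank ℝ (EuclideanSpace ℝ (Fin 2))])).ne
  rw [← hausdorffMeasure_real]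
  exact hausdorffMeasure_image_eq_zero_of_fderiv_fderiv_eq_zero hf hs hs2 h1 h2

theorem exists_mem_nhds_volume_image_eq_zero {f : EuclideanSpace ℝ (Fin 2) → ℝ}
    (hf : ContDiff ℝ 2 f) {s : Set (EuclideanSpace ℝ (Fin 2))} (hs : ∀ x ∈ s, fderiv ℝ f x = 0)
    {p : EuclideanSpace ℝ (Fin 2)} (hp : fderiv ℝ (fderiv ℝ f) p ≠ 0) :
    ∃ U ∈ 𝓝 p, volume (f '' (s ∩ U)) = 0 := by
  obtain ⟨v, hv⟩ : ∃ v, (ContinuousLinearMap.apply ℝ ℝ v).comp (fderiv ℝ (fderiv ℝ f) p) ≠ 0 := by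
    by_contra! h
    exact hp (ContinuousLinearMap.ext fun u => ContinuousLinearMap.ext fun v => by
      simpa using congrArg (· u) (h v))
  have hstrict : HasStrictFDerivAt (fun x => fderiv ℝ f x v)
      ((ContinuousLinearMap.apply ℝ ℝ v).comp (fderiv ℝ (fderiv ℝ f) p)) p :=
    (ContinuousLinearMap.apply ℝ ℝ v).hasStrictFDerivAt.comp p
      ((hf.fderiv_right (m := 1) (by norm_num)).contDiffAt.hasStrictFDerivAt one_ne_zero)
  obtain ⟨μ, K, hK⟩ := exists_antilipschitzWith_prod_of_ne_zero hv
  obtain ⟨U, hU, hUK⟩ := hstrict.exists_mem_nhds_dist_le_of_antilipschitzWith hK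
  refine ⟨U, hU, volume_image_eq_zero_of_hasFDerivWithinAt_zero (φ := μ) (K := K) ?_ ?_⟩
  · rintro x ⟨hxs, hxU⟩ y ⟨hys, hyU⟩
    exact hUK x hxU y hyU (by simp [hs x hxs, hs y hys])
  · rintro x ⟨hxs, -⟩
    have hx := (hf.differentiable (by norm_num) x).hasFDerivAt
    rw [hs x hxs] at hx
    exact hx.hasFDerivWithinAt

/-- If `f : ℝ² → ℝ` is twice continuously differentiable and its gradient vanishes at every
point of `E`, then `f '' E` has one-dimensional Lebesgue measure zero. -/
theorem whitney_sard_C2 (f : EuclideanSpace ℝ (Fin 2) → ℝ) (hf : ContDiff ℝ 2 f)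
    (E : Set (EuclideanSpace ℝ (Fin 2)))
    (hE : ∀ p ∈ E, fderiv ℝ f p = 0) :
    volume (f '' E) = 0 := by
  have hA : volume (f '' {p ∈ E | fderiv ℝ (fderiv ℝ f) p = 0}) = 0 :=
    measure_image_null_of_locally_null _ _ _ fun p _ =>
      ⟨_, inter_mem_nhdsWithin _ (closedBall_mem_nhds p one_pos),
        volume_image_eq_zero_of_fderiv_fderiv_eq_zero hf (isBounded_closedBall.subset
          inter_subset_right) (fun x hx => hE x hx.1.1) fun x hx => hx.1.2⟩
  have hB : volume (f '' {p ∈ E | fderiv ℝ (fderiv ℝ f) p ≠ 0}) = 0 :=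
    measure_image_null_of_locally_null _ _ _ fun p hp => by
      obtain ⟨U, hU, hUf⟩ := exists_mem_nhds_volume_image_eq_zero hf hE hp.2
      exact ⟨_, inter_mem_nhdsWithin _ hU,
        measure_mono_null (image_mono (inter_subset_inter_left _ (sep_subset _ _))) hUf⟩
  refine measure_mono_null ?_ (measure_union_null hA hB)
  rintro _ ⟨p, hp, rfl⟩
  by_cases h : fderiv ℝ (fderiv ℝ f) p = 0
  exacts [Or.inl ⟨p, ⟨hp, h⟩, rfl⟩, Or.inr ⟨p, ⟨hp, h⟩, rfl⟩]
end

section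
/- Let f : ℝ² → ℝ be twice continuously differentiable, and let E be a connected subset of ℝ² such that the gradient of f vanishes at every point of E. Then f is constant on E. -/
/-!
If `Df p = 0` and `‖D²f‖ ≤ M` on a convex neighbourhood of `p`, then `‖f q - f p‖ ≤ M ‖q - p‖²`
there, so near any point `f` is `2`-Hölder with constant `M` on the critical set and maps
`μH[2]`-measure to `μH[1]`-measure with factor `M`. On the critical points where `D²f` vanishes
`M` can be taken arbitrarily small; the other critical points form a null set, because at a
Lebesgue density point of `{Df = 0}` every direction is tangent to this set, which forces
`D²f = 0`. Hence the critical values of `f` form a null set (Morse–Sard), and `f '' E`, an interval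
contained in it, is a single point.
-/

open Set Metric Filter MeasureTheory Topology
open scoped NNReal ENNReal

section Holder

variable {E F : Type*} [NormedAddCommGroup E] [NormedSpace ℝ E]
  [NormedAddCommGroup F] [NormedSpace ℝ F] {f : E → F} {s : Set E}

theorem Convex.norm_sub_le_of_fderiv_eq_zero {M : ℝ} (hs : Convex ℝ s)
    (hf : ∀ x ∈ s, DifferentiableAt ℝ f x) (hf' : ∀ x ∈ s, DifferentiableAt ℝ (fderiv ℝ f) x)
    (hM : ∀ x ∈ s, ‖fderiv ℝ (fderiv ℝ f) x‖ ≤ M) {p q : E} (hp : p ∈ s) (hq : q ∈ s)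
    (hcrit : fderiv ℝ f p = 0) : ‖f q - f p‖ ≤ M * ‖q - p‖ ^ 2 := by
  have hM0 : 0 ≤ M := (norm_nonneg (fderiv ℝ (fderiv ℝ f) p)).trans (hM p hp)
  have hseg : segment ℝ p q ⊆ s := hs.segment_subset hp hq
  have hslope : ∀ z ∈ segment ℝ p q, ‖fderiv ℝ f z‖ ≤ M * ‖q - p‖ := fun z hz => calc
    ‖fderiv ℝ f z‖ = ‖fderiv ℝ f z - fderiv ℝ f p‖ := by rw [hcrit, sub_zero]
    _ ≤ M * ‖z - p‖ := hs.norm_image_sub_le_of_norm_fderiv_le hf' hM hp (hseg hz)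
    _ ≤ M * ‖q - p‖ := by gcongr; exact norm_sub_le_of_mem_segment hz
  calc ‖f q - f p‖ ≤ M * ‖q - p‖ * ‖q - p‖ :=
        (convex_segment p q).norm_image_sub_le_of_norm_fderiv_le (fun z hz => hf z (hseg hz))
          hslope (left_mem_segment ℝ p q) (right_mem_segment ℝ p q)
    _ = M * ‖q - p‖ ^ 2 := by ring

theorem Convex.holderOnWith_two_of_fderiv_eq_zero {M : ℝ≥0} (hs : Convex ℝ s)
    (hf : ∀ x ∈ s, DifferentiableAt ℝ f x) (hf' : ∀ x ∈ s, DifferentiableAt ℝ (fderiv ℝ f) x)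
    (hM : ∀ x ∈ s, ‖fderiv ℝ (fderiv ℝ f) x‖ ≤ M) :
    HolderOnWith M 2 f (s ∩ {x | fderiv ℝ f x = 0}) := by
  rintro q ⟨hq, -⟩ p ⟨hp, hcrit⟩
  rw [edist_dist, edist_dist, ← ENNReal.ofReal_coe_nnreal, NNReal.coe_ofNat,
    ENNReal.ofReal_rpow_of_nonneg dist_nonneg zero_le_two, Real.rpow_two, dist_eq_norm,
    dist_eq_norm]
  exact (ENNReal.ofReal_le_ofReal (hs.norm_sub_le_of_fderiv_eq_zero hf hf' hM hp hq hcrit)).trans_eq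
    (ENNReal.ofReal_mul M.2)

end Holder

theorem hausdorffMeasure_image_le_of_locally_holderOnWith {X Y : Type*} [EMetricSpace X]
    [EMetricSpace Y] [MeasurableSpace X] [BorelSpace X] [MeasurableSpace Y] [BorelSpace Y]
    [SecondCountableTopology X] {C r : ℝ≥0} {f : X → Y} {s : Set X} (hs : MeasurableSet s)
    (hf : ∀ x ∈ s, ∃ t ∈ 𝓝[s] x, HolderOnWith C r f t) (hr : 0 < r) {d : ℝ} (hd : 0 ≤ d) :
    μH[d] (f '' s) ≤ (C : ℝ≥0∞) ^ d * μH[r * d] s := by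
  have hopen : ∀ x ∈ s, ∃ u, IsOpen u ∧ x ∈ u ∧ HolderOnWith C r f (s ∩ u) := by
    intro x hx
    obtain ⟨t, ht, hft⟩ := hf x hx
    obtain ⟨u, hu, hxu, hut⟩ := mem_nhdsWithin.1 ht
    exact ⟨u, hu, hxu, hft.mono (inter_comm s u ▸ hut)⟩
  choose! u hu hxu hfu using hopen
  rcases s.eq_empty_or_nonempty with rfl | ⟨x, hx⟩
  · simp
  obtain ⟨t, hts, htc, hcov⟩ := TopologicalSpace.countable_cover_nhdsWithin
    (fun x hx => mem_nhdsWithin_of_mem_nhds ((hu x hx).mem_nhds (hxu x hx)))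
  obtain ⟨e, rfl⟩ := htc.exists_eq_range (by
    obtain ⟨y, hy, -⟩ := mem_iUnion₂.1 (hcov hx)
    exact ⟨y, hy⟩)
  set B : ℕ → Set X := fun n => u (e n)
  have hB_open (n : ℕ) : IsOpen (B n) := hu _ (hts ⟨n, rfl⟩)
  have hB_holder (n : ℕ) : HolderOnWith C r f (s ∩ B n) := hfu _ (hts ⟨n, rfl⟩)
  set P : ℕ → Set X := fun n => s ∩ disjointed B n
  have hP : ⋃ n, P n = s := by
    rw [← inter_iUnion, iUnion_disjointed, inter_eq_left]
    simpa using hcov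
  calc μH[d] (f '' s) = μH[d] (⋃ n, f '' P n) := by rw [← image_iUnion, hP]
    _ ≤ ∑' n, μH[d] (f '' P n) := measure_iUnion_le _
    _ ≤ ∑' n, (C : ℝ≥0∞) ^ d * μH[r * d] (P n) := ENNReal.tsum_le_tsum fun n =>
      HolderOnWith.hausdorffMeasure_image_le
        ((hB_holder n).mono (inter_subset_inter_right _ (disjointed_subset B n))) hr hd
    _ = (C : ℝ≥0∞) ^ d * μH[r * d] s := by
      rw [ENNReal.tsum_mul_left, ← measure_iUnion, hP]
      · exact (disjoint_disjointed B).mono fun i j h =>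
          h.mono inter_subset_right inter_subset_right
      · exact fun n => hs.inter (MeasurableSet.disjointed (fun n => (hB_open n).measurableSet) n)

section Density

variable {E : Type*} [NormedAddCommGroup E] [NormedSpace ℝ E] [FiniteDimensional ℝ E]
  [MeasurableSpace E] [BorelSpace E] (μ : Measure E) [μ.IsAddHaarMeasure]

theorem tangentConeAt_eq_univ_of_tendsto_density_one {s : Set E} {x : E}
    (h : Tendsto (fun r => μ (s ∩ closedBall x r) / μ (closedBall x r)) (𝓝[>] 0) (𝓝 1)) :
    tangentConeAt ℝ s x = univ := by
  refine eq_univ_of_forall fun y => ?_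
  simp only [tangentConeAt_eq_biInter_closure, mem_iInter₂]
  intro U hU
  obtain ⟨δ, hδ, hδU⟩ := Metric.mem_nhds_iff.1 hU
  refine Metric.mem_closure_iff.2 fun ε hε => ?_
  have hsmall : ∀ᶠ r in 𝓝[>] (0 : ℝ), r * (‖y‖ + ε) < δ := by
    have : Tendsto (fun r : ℝ => r * (‖y‖ + ε)) (𝓝[>] 0) (𝓝 0) :=
      tendsto_nhdsWithin_of_tendsto_nhds ((continuous_mul_const _).tendsto' 0 0 (zero_mul _))
    exact this (Iio_mem_nhds hδ)
  -- `s` meets `x + r • ball y ε` for all small `r`, giving `x + r • w ∈ s` with `w` close to `y`.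
  have hmeets := Measure.eventually_nonempty_inter_smul_of_density_one μ s x h (ball y ε)
    measurableSet_ball (measure_ball_pos μ y hε).ne'
  obtain ⟨r, hr, ⟨z, hzs, hz⟩, hr0⟩ := (hsmall.and (hmeets.and self_mem_nhdsWithin)).exists
  simp only [singleton_add, image_add_left, mem_preimage, mem_smul_set] at hz
  obtain ⟨w, hw, hwz⟩ := hz
  refine ⟨w, ⟨r⁻¹, mem_univ _, r • w, ⟨hδU ?_, ?_⟩, ?_⟩, mem_ball_comm.1 hw⟩
  · rw [mem_ball_zero_iff, norm_smul, Real.norm_of_nonneg hr0.le]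
    calc r * ‖w‖ ≤ r * (‖y‖ + ‖w - y‖) := by gcongr; exact norm_le_norm_add_norm_sub' w y
      _ ≤ r * (‖y‖ + ε) := by gcongr; exact (mem_ball_iff_norm.1 hw).le
      _ < δ := hr
  · simpa [mem_preimage, hwz] using hzs
  · exact inv_smul_smul₀ hr0.ne' w

theorem ae_restrict_fderiv_eq_zero_of_eqOn_const {F : Type*} [NormedAddCommGroup F]
    [NormedSpace ℝ F] {g : E → F} {s : Set E} {c : F} (hs : MeasurableSet s)
    (hg : ∀ x ∈ s, DifferentiableAt ℝ g x) (hgs : ∀ x ∈ s, g x = c) :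
    ∀ᵐ x ∂μ.restrict s, fderiv ℝ g x = 0 := by
  filter_upwards [Besicovitch.ae_tendsto_measure_inter_div μ s, ae_restrict_mem hs] with x hx hxs
  have hunique : UniqueDiffWithinAt ℝ s x :=
    ⟨by simp [tangentConeAt_eq_univ_of_tendsto_density_one μ hx], subset_closure hxs⟩
  exact hunique.eq (hg x hxs).hasFDerivAt.hasFDerivWithinAt
    ((hasFDerivWithinAt_const c x s).congr hgs (hgs x hxs))

end Density

section Sard

variable {E F : Type*} [NormedAddCommGroup E] [NormedSpace ℝ E] [MeasurableSpace E] [BorelSpace E]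
  [NormedAddCommGroup F] [NormedSpace ℝ F] [MeasurableSpace F] [BorelSpace F] {f : E → F}

theorem ContDiff.hausdorffMeasure_image_le_of_fderiv_eq_zero [SecondCountableTopology E]
    (hf : ContDiff ℝ 2 f) {s : Set E} (hs : MeasurableSet s) (hcrit : ∀ x ∈ s, fderiv ℝ f x = 0)
    {M : ℝ≥0} (hM : ∀ x ∈ s, ‖fderiv ℝ (fderiv ℝ f) x‖ < M) {d : ℝ} (hd : 0 ≤ d) :
    μH[d] (f '' s) ≤ (M : ℝ≥0∞) ^ d * μH[2 * d] s := by
  have hf' : ContDiff ℝ 1 (fderiv ℝ f) := hf.fderiv_right le_rfl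
  have hopen : IsOpen {x | ‖fderiv ℝ (fderiv ℝ f) x‖ < M} :=
    isOpen_lt (hf'.continuous_fderiv one_ne_zero).norm continuous_const
  have hloc : ∀ x ∈ s, ∃ t ∈ 𝓝[s] x, HolderOnWith M 2 f t := by
    intro x hx
    obtain ⟨ρ, hρ, hball⟩ := Metric.isOpen_iff.1 hopen x (hM x hx)
    refine ⟨ball x ρ ∩ {y | fderiv ℝ f y = 0},
      mem_nhdsWithin.2 ⟨ball x ρ, isOpen_ball, mem_ball_self hρ, fun y hy => ⟨hy.1, hcrit y hy.2⟩⟩,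
      (convex_ball x ρ).holderOnWith_two_of_fderiv_eq_zero
        (fun y _ => hf.differentiable two_ne_zero y) (fun y _ => hf'.differentiable one_ne_zero y)
        fun y hy => (hball hy).le⟩
  simpa using hausdorffMeasure_image_le_of_locally_holderOnWith hs hloc two_pos hd

theorem ContDiff.hausdorffMeasure_image_eq_zero_of_hausdorffMeasure_eq_zero
    [SecondCountableTopology E] (hf : ContDiff ℝ 2 f) {s : Set E} (hs : MeasurableSet s)
    (hcrit : ∀ x ∈ s, fderiv ℝ f x = 0) (hs0 : μH[2] s = 0) : μH[1] (f '' s) = 0 := by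
  have hnorm : Continuous fun x => ‖fderiv ℝ (fderiv ℝ f) x‖ :=
    ((hf.fderiv_right le_rfl).continuous_fderiv one_ne_zero).norm
  have hcover : s = ⋃ n : ℕ, s ∩ {x | ‖fderiv ℝ (fderiv ℝ f) x‖ < n} := by
    simp only [← inter_iUnion, left_eq_inter]
    exact fun x _ => mem_iUnion.2 (exists_nat_gt ‖fderiv ℝ (fderiv ℝ f) x‖)
  rw [hcover, image_iUnion]
  refine measure_iUnion_null fun n => le_antisymm ?_ bot_le
  have := hf.hausdorffMeasure_image_le_of_fderiv_eq_zero (M := n) (d := 1)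
    (hs.inter (isOpen_lt hnorm continuous_const).measurableSet) (fun x hx => hcrit x hx.1)
    (fun x hx => by simpa using hx.2) zero_le_one
  rwa [mul_one, measure_mono_null inter_subset_left hs0, mul_zero] at this

theorem ContDiff.hausdorffMeasure_image_eq_zero_of_fderiv_fderiv_eq_zero
    [SecondCountableTopology E] (hf : ContDiff ℝ 2 f) {s : Set E} (hs : MeasurableSet s)
    (hcrit : ∀ x ∈ s, fderiv ℝ f x = 0) (hflat : ∀ x ∈ s, fderiv ℝ (fderiv ℝ f) x = 0)
    (hs_top : μH[2] s ≠ ∞) : μH[1] (f '' s) = 0 := by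
  have hbound : ∀ M : ℝ≥0, 0 < M → μH[1] (f '' s) ≤ M * μH[2] s := fun M hM => by
    have := hf.hausdorffMeasure_image_le_of_fderiv_eq_zero (M := M) (d := 1) hs hcrit
      (fun x hx => by rw [hflat x hx, ContinuousLinearMap.opNorm_zero]; exact_mod_cast hM)
      zero_le_one
    simpa only [ENNReal.rpow_one, mul_one] using this
  have hlim : Tendsto (fun M : ℝ≥0 => (M : ℝ≥0∞) * μH[2] s) (𝓝[>] 0) (𝓝 0) := by
    have h0 : Tendsto (fun M : ℝ≥0 => (M : ℝ≥0∞)) (𝓝[>] 0) (𝓝 0) :=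
      (ENNReal.tendsto_coe.2 tendsto_id).mono_left nhdsWithin_le_nhds
    simpa using ENNReal.Tendsto.mul_const h0 (Or.inr hs_top)
  exact le_antisymm (ge_of_tendsto hlim (eventually_nhdsWithin_of_forall hbound)) bot_le

theorem ContDiff.hausdorffMeasure_image_setOf_fderiv_eq_zero [FiniteDimensional ℝ E]
    (hE : Module.finrank ℝ E = 2) (hf : ContDiff ℝ 2 f) :
    μH[1] (f '' {x | fderiv ℝ f x = 0}) = 0 := by
  have hf' : ContDiff ℝ 1 (fderiv ℝ f) := hf.fderiv_right le_rfl
  have : (μH[2] : Measure E).IsAddHaarMeasure := by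
    simpa [hE] using isAddHaarMeasure_hausdorffMeasure (E := E)
  set C := {x | fderiv ℝ f x = 0}
  set C₂ := C ∩ {x | fderiv ℝ (fderiv ℝ f) x = 0}
  have hC : IsClosed C := isClosed_eq hf'.continuous continuous_const
  have hC₂ : IsClosed C₂ :=
    hC.inter (isClosed_eq (hf'.continuous_fderiv one_ne_zero) continuous_const)
  have hN : μH[2] (C \ C₂) = 0 := by
    have hae := ae_restrict_fderiv_eq_zero_of_eqOn_const μH[2] hC.measurableSet
      (fun x _ => hf'.differentiable one_ne_zero x) fun x hx => hx
    rw [ae_restrict_iff' hC.measurableSet, ae_iff] at hae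
    refine measure_mono_null (fun x hx => ?_) hae
    exact fun h => hx.2 ⟨hx.1, h hx.1⟩
  have hC₂_image : μH[1] (f '' C₂) = 0 := by
    rw [← iUnion_inter_closedBall_nat C₂ 0, image_iUnion]
    exact measure_iUnion_null fun n =>
      hf.hausdorffMeasure_image_eq_zero_of_fderiv_fderiv_eq_zero
        (hC₂.measurableSet.inter measurableSet_closedBall) (fun x hx => hx.1.1)
        (fun x hx => hx.1.2)
        (measure_lt_top_of_subset inter_subset_right measure_closedBall_lt_top.ne).ne
  rw [← union_sdiff_cancel (inter_subset_left : C₂ ⊆ C), image_union]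
  exact measure_union_null hC₂_image
    (hf.hausdorffMeasure_image_eq_zero_of_hausdorffMeasure_eq_zero
      (hC.measurableSet.diff hC₂.measurableSet) (fun x hx => hx.1) hN)

end Sard

theorem IsPreconnected.subsingleton_of_volume_eq_zero {s : Set ℝ} (hs : IsPreconnected s)
    (hs0 : volume s = 0) : s.Subsingleton := by
  suffices ∀ a ∈ s, ∀ b ∈ s, a ≤ b → a = b from fun a ha b hb =>
    (le_total a b).elim (this a ha b hb) fun hba => (this b hb a ha hba).symm
  intro a ha b hb hab
  have hIcc : volume (Icc a b) = 0 := measure_mono_null (hs.ordConnected.out ha hb) hs0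
  rw [Real.volume_Icc, ENNReal.ofReal_eq_zero] at hIcc
  linarith

/-- If `f : ℝ² → ℝ` is twice continuously differentiable, `E ⊆ ℝ²` is connected and the
gradient of `f` vanishes at every point of `E`, then `f` is constant on `E`. -/
theorem constant_on_connected_critical_set (f : EuclideanSpace ℝ (Fin 2) → ℝ)
    (hf : ContDiff ℝ 2 f) (E : Set (EuclideanSpace ℝ (Fin 2)))
    (hconn : IsConnected E) (hE : ∀ p ∈ E, fderiv ℝ f p = 0) :
    ∀ x ∈ E, ∀ y ∈ E, f x = f y := by
  intro x hx y hy
  have hnull : volume (f '' E) = 0 := by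
    rw [← hausdorffMeasure_real]
    exact measure_mono_null (image_mono fun p hp => hE p hp)
      (hf.hausdorffMeasure_image_setOf_fderiv_eq_zero finrank_euclideanSpace_fin)
  exact (hconn.isPreconnected.image f hf.continuous.continuousOn).subsingleton_of_volume_eq_zero
    hnull (mem_image_of_mem f hx) (mem_image_of_mem f hy)
end

section
/- Let (M, d) be a metric space, let p : [a, b] → M be a continuous path of finite length, and let f : M → ℝ. Suppose that f has gradient zero uniformly on the image p([a, b]): for every ε > 0 there exists δ > 0 such that for every q ∈ p([a, b]) and every z ∈ M with 0 < d(z, q) < δ, one has |f(z) − f(q)| ≤ ε·d(z, q). Then f ∘ p is constant on [a, b]. -/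
/-!
Fix `ε > 0` and the matching `δ`. By uniform continuity of `p`, a fine enough uniform
partition `a = v₀ < ⋯ < vₙ = b` has `d(p vₖ, p vₖ₊₁) < δ`, so each step changes `f ∘ p` by at
most `ε · d(p vₖ, p vₖ₊₁)`; summing, `f ∘ p` moves by at most `ε · L` along the partition, and
by at most `ε · δ` more from the nearest partition point to any `x`. Letting `ε → 0` gives
`f (p x) = f (p a)`.
-/

open Finset Set

section UniformGrid

noncomputable def uniformGrid (a b : ℝ) (n k : ℕ) : ℝ := a + k * ((b - a) / n)

variable {a b : ℝ} {n : ℕ}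

@[simp] lemma uniformGrid_zero : uniformGrid a b n 0 = a := by simp [uniformGrid]

lemma uniformGrid_self (hn : n ≠ 0) : uniformGrid a b n n = b := by
  rw [uniformGrid, mul_div_cancel₀ _ (Nat.cast_ne_zero.2 hn : (n : ℝ) ≠ 0)]; ring

lemma uniformGrid_succ_sub (k : ℕ) :
    uniformGrid a b n (k + 1) - uniformGrid a b n k = (b - a) / n := by
  simp only [uniformGrid]; push_cast; ring

lemma uniformGrid_strictMono (hab : a < b) (hn : n ≠ 0) : StrictMono (uniformGrid a b n) :=
  strictMono_nat_of_lt_succ fun k => sub_pos.1 <| by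
    rw [uniformGrid_succ_sub]; exact div_pos (sub_pos.2 hab) (by positivity)

lemma uniformGrid_mem_Icc (hab : a < b) (hn : n ≠ 0) {k : ℕ} (hk : k ≤ n) :
    uniformGrid a b n k ∈ Icc a b := by
  have hmono := (uniformGrid_strictMono hab hn).monotone
  exact ⟨by simpa using hmono k.zero_le, by simpa [uniformGrid_self hn] using hmono hk⟩

lemma exists_dist_uniformGrid_lt (hab : a < b) (hn : n ≠ 0) {z : ℝ} (hz : z ∈ Icc a b) :
    ∃ k ≤ n, dist z (uniformGrid a b n k) < (b - a) / n := by
  set h := (b - a) / n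
  have hh : 0 < h := div_pos (sub_pos.2 hab) (by positivity)
  set θ := (z - a) / h
  have hθ : z - a = θ * h := (div_mul_cancel₀ _ hh.ne').symm
  have hθn : θ ≤ n := by
    rw [div_le_iff₀ hh, mul_div_cancel₀ _ (Nat.cast_ne_zero.2 hn)]; linarith [hz.2]
  have h₁ : (⌊θ⌋₊ : ℝ) ≤ θ := Nat.floor_le (div_nonneg (sub_nonneg.2 hz.1) hh.le)
  have h₂ : θ < ⌊θ⌋₊ + 1 := Nat.lt_floor_add_one θ
  refine ⟨⌊θ⌋₊, Nat.cast_le.1 (h₁.trans hθn), ?_⟩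
  rw [Real.dist_eq, uniformGrid, abs_lt]
  constructor <;> nlinarith

end UniformGrid

lemma abs_sub_le_mul_sum_dist {M : Type*} [PseudoMetricSpace M] {f : M → ℝ} {g : ℕ → M}
    {ε : ℝ} {n : ℕ} (h : ∀ k < n, |f (g (k + 1)) - f (g k)| ≤ ε * dist (g k) (g (k + 1))) :
    |f (g n) - f (g 0)| ≤ ε * ∑ k ∈ range n, dist (g k) (g (k + 1)) := by
  rw [← sum_range_sub (fun k => f (g k)), mul_sum]
  exact (abs_sum_le_sum_abs _ _).trans (sum_le_sum fun k hk => h k (mem_range.1 hk))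

section FiniteLength

variable {M : Type*} [MetricSpace M]

def LengthLE (p : ℝ → M) (a b L : ℝ) : Prop :=
  ∀ (n : ℕ) (x : Fin (n + 1) → ℝ), StrictMono x → x 0 = a → x (Fin.last n) = b →
    ∑ i : Fin n, dist (p (x i.castSucc)) (p (x i.succ)) ≤ L

lemma LengthLE.sum_dist_uniformGrid_le {p : ℝ → M} {a b L : ℝ} (hL : LengthLE p a b L)
    (hab : a < b) {n : ℕ} (hn : n ≠ 0) :
    ∑ k ∈ range n, dist (p (uniformGrid a b n k)) (p (uniformGrid a b n (k + 1))) ≤ L := by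
  have := hL n (fun i => uniformGrid a b n i)
    ((uniformGrid_strictMono hab hn).comp Fin.val_strictMono) uniformGrid_zero
    (uniformGrid_self hn)
  simpa [Fin.sum_univ_eq_sum_range
    (fun k => dist (p (uniformGrid a b n k)) (p (uniformGrid a b n (k + 1))))] using this

variable {f : M → ℝ} {ε δ : ℝ}

lemma abs_sub_le_mul_dist_of_dist_lt {S : Set M}
    (h : ∀ q ∈ S, ∀ z, 0 < dist z q → dist z q < δ → |f z - f q| ≤ ε * dist z q)
    {q z : M} (hq : q ∈ S) (hz : dist z q < δ) : |f z - f q| ≤ ε * dist z q := by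
  rcases (dist_nonneg : 0 ≤ dist z q).eq_or_lt with h0 | h0
  · rw [← h0, dist_eq_zero.1 h0.symm, sub_self, abs_zero, mul_zero]
  · exact h q hq z h0 hz

lemma abs_sub_le_mul_length_add {p : ℝ → M} {a b L : ℝ} (hab : a < b)
    (hcont : ContinuousOn p (Icc a b)) (hL : LengthLE p a b L) (hε : 0 ≤ ε) (hδ : 0 < δ)
    (hgrad : ∀ q ∈ p '' Icc a b, ∀ z, 0 < dist z q → dist z q < δ → |f z - f q| ≤ ε * dist z q)
    {x : ℝ} (hx : x ∈ Icc a b) : |f (p x) - f (p a)| ≤ ε * (L + δ) := by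
  obtain ⟨η, hη, hUC⟩ := Metric.uniformContinuousOn_iff.1
    (isCompact_Icc.uniformContinuousOn_of_continuous hcont) δ hδ
  have hbound : ∀ s ∈ Icc a b, ∀ t ∈ Icc a b, dist t s < η →
      |f (p t) - f (p s)| ≤ ε * dist (p t) (p s) ∧ dist (p t) (p s) < δ := fun s hs t ht hts =>
    ⟨abs_sub_le_mul_dist_of_dist_lt hgrad (mem_image_of_mem p hs) (hUC t ht s hs hts),
      hUC t ht s hs hts⟩
  obtain ⟨n, hn⟩ := exists_nat_gt ((b - a) / η)
  have hn0 : n ≠ 0 := by exact_mod_cast ((div_pos (sub_pos.2 hab) hη).trans hn).ne'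
  have hmesh : (b - a) / n < η := by rwa [div_lt_comm₀ (by positivity) hη]
  set v := uniformGrid a b n
  have hv : ∀ {k}, k ≤ n → v k ∈ Icc a b := uniformGrid_mem_Icc hab hn0
  obtain ⟨i, hi, hxi⟩ := exists_dist_uniformGrid_lt hab hn0 hx
  have hstep : ∀ k < i,
      |f (p (v (k + 1))) - f (p (v k))| ≤ ε * dist (p (v k)) (p (v (k + 1))) := by
    intro k hk
    rw [dist_comm]
    refine (hbound _ (hv (by omega)) _ (hv (by omega)) ?_).1
    rwa [Real.dist_eq, uniformGrid_succ_sub, abs_of_pos (by positivity)]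
  obtain ⟨hxi_f, hxi_p⟩ := hbound _ (hv hi) x hx (hxi.trans hmesh)
  calc |f (p x) - f (p a)| = |f (p x) - f (p (v 0))| := by simp [v]
    _ ≤ |f (p x) - f (p (v i))| + |f (p (v i)) - f (p (v 0))| := abs_sub_le _ _ _
    _ ≤ ε * δ + ε * ∑ k ∈ range n, dist (p (v k)) (p (v (k + 1))) := by
      gcongr
      · exact hxi_f.trans (by gcongr)
      · exact (abs_sub_le_mul_sum_dist (g := fun k => p (v k)) hstep).trans (by gcongr)
    _ ≤ ε * (L + δ) := by nlinarith [hL.sum_dist_uniformGrid_le hab hn0]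

end FiniteLength

theorem constant_along_finite_length_path_general {M : Type*} [MetricSpace M] (a b : ℝ)
    (p : ℝ → M) (hcont : ContinuousOn p (Set.Icc a b))
    (hlen : ∃ L : ℝ, ∀ (n : ℕ) (x : Fin (n + 1) → ℝ), StrictMono x →
      x 0 = a → x (Fin.last n) = b →
      ∑ i : Fin n, dist (p (x i.castSucc)) (p (x i.succ)) ≤ L)
    (f : M → ℝ)
    (hgrad : ∀ ε > 0, ∃ δ > 0, ∀ q ∈ p '' Set.Icc a b, ∀ z : M,
      0 < dist z q → dist z q < δ → |f z - f q| ≤ ε * dist z q) :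
    ∀ x ∈ Set.Icc a b, ∀ y ∈ Set.Icc a b, f (p x) = f (p y) := by
  suffices h : ∀ x ∈ Icc a b, f (p x) = f (p a) from
    fun x hx y hy => (h x hx).trans (h y hy).symm
  intro x hx
  rcases hx.1.eq_or_lt with rfl | hax
  · rfl
  obtain ⟨L, hL⟩ := hlen
  refine eq_of_forall_dist_le fun ε hε => ?_
  obtain ⟨δ, hδ, hgradδ⟩ := hgrad (ε / (|L| + 1)) (by positivity)
  have hgrad₁ : ∀ q ∈ p '' Icc a b, ∀ z, 0 < dist z q → dist z q < min δ 1 →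
      |f z - f q| ≤ ε / (|L| + 1) * dist z q := fun q hq z hz hzδ =>
    hgradδ q hq z hz (hzδ.trans_le (min_le_left _ _))
  calc dist (f (p x)) (f (p a))
      ≤ ε / (|L| + 1) * (L + min δ 1) :=
        abs_sub_le_mul_length_add (hax.trans_le hx.2) hcont hL (by positivity)
          (lt_min hδ one_pos) hgrad₁ hx
    _ ≤ ε / (|L| + 1) * (|L| + 1) := by gcongr; exacts [le_abs_self L, min_le_right _ _]
    _ = ε := div_mul_cancel₀ _ (by positivity)

/-- If `p : [a, b] → M` is a continuous path of finite length and `f : M → ℝ` has gradient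
zero uniformly on `p([a, b])`, then `f ∘ p` is constant on `[a, b]`. -/
theorem constant_along_finite_length_path {M : Type*} [MetricSpace M] (a b : ℝ) (hab : a ≤ b)
    (p : ℝ → M) (hcont : ContinuousOn p (Set.Icc a b))
    (hlen : ∃ L : ℝ, ∀ (n : ℕ) (x : Fin (n + 1) → ℝ), StrictMono x →
      x 0 = a → x (Fin.last n) = b →
      ∑ i : Fin n, dist (p (x i.castSucc)) (p (x i.succ)) ≤ L)
    (f : M → ℝ)
    (hgrad : ∀ ε > 0, ∃ δ > 0, ∀ q ∈ p '' Set.Icc a b, ∀ z : M,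
      0 < dist z q → dist z q < δ → |f z - f q| ≤ ε * dist z q) :
    ∀ x ∈ Set.Icc a b, ∀ y ∈ Set.Icc a b, f (p x) = f (p y) :=
  constant_along_finite_length_path_general a b p hcont hlen f hgrad
end

section
/- Let f : [a, b] → ℝ be continuous, and let k ≥ 0. Suppose that at every point p ∈ (a, b), limsup_{x → p} |f(x) − f(p)|/|x − p| ≤ k, i.e. for every ε > 0 there exists δ > 0 such that |f(x) − f(p)| ≤ (k + ε)·|x − p| whenever x ∈ [a, b] and |x − p| < δ. Then f is Lipschitz with constant k on [a, b]: |f(x) − f(y)| ≤ k·|x − y| for all x, y ∈ [a, b]. -/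
/-! The function `t ↦ |f t - f x|` has right lower Dini derivative at most `k` wherever the
slope hypothesis holds, so the comparison principle for Dini derivatives bounds it by
`k * (t - x)`. This gives the Lipschitz bound between interior points, and continuity carries
it to the endpoints. -/

open Set Filter Topology

theorem abs_sub_le_of_forall_eventually_right_slope_le {f : ℝ → ℝ} {k x y : ℝ} (hxy : x ≤ y)
    (hf : ContinuousOn f (Icc x y))
    (hslope : ∀ p ∈ Ico x y, ∀ ε > 0, ∀ᶠ z in 𝓝[>] p, |f z - f p| ≤ (k + ε) * (z - p)) :
    |f y - f x| ≤ k * (y - x) := by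
  refine image_le_of_liminf_slope_right_le_deriv_boundary (f := fun t => |f t - f x|)
    (B := fun t => k * (t - x)) (B' := fun _ => k) (by fun_prop) (by simp) (by fun_prop)
    (fun t _ => by simpa using ((hasDerivAt_id t).sub_const x).const_mul k |>.hasDerivWithinAt)
    ?_ ⟨hxy, le_rfl⟩
  intro p hp r hr
  refine Eventually.frequently ?_
  filter_upwards [hslope p hp ((r - k) / 2) (by linarith), self_mem_nhdsWithin]
    with z hz (hpz : p < z)
  have hzp : 0 < z - p := sub_pos.2 hpz
  rw [slope_def_field, div_lt_iff₀ hzp]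
  calc |f z - f x| - |f p - f x| ≤ |f z - f p| := by
        simpa using abs_sub_abs_le_abs_sub (f z - f x) (f p - f x)
    _ ≤ (k + (r - k) / 2) * (z - p) := hz
    _ < r * (z - p) := by nlinarith

theorem eventually_right_slope_le_of_forall_slope_le {f : ℝ → ℝ} {a b k p : ℝ} (hp : p ∈ Ioo a b)
    (hslope : ∀ ε > 0, ∃ δ > 0, ∀ x ∈ Icc a b, |x - p| < δ → |f x - f p| ≤ (k + ε) * |x - p|)
    (ε : ℝ) (hε : 0 < ε) : ∀ᶠ z in 𝓝[>] p, |f z - f p| ≤ (k + ε) * (z - p) := by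
  obtain ⟨δ, hδ, hδ'⟩ := hslope ε hε
  filter_upwards [Ioo_mem_nhdsGT (lt_min (lt_add_of_pos_right p hδ) hp.2)] with z hz
  have hzp : 0 < z - p := sub_pos.2 hz.1
  have hzδ : z < p + δ := hz.2.trans_le (min_le_left _ _)
  have hzb : z < b := hz.2.trans_le (min_le_right _ _)
  simpa [abs_of_pos hzp] using
    hδ' z ⟨hp.1.le.trans hz.1.le, hzb.le⟩ (by rw [abs_of_pos hzp]; linarith)

theorem dist_le_mul_dist_of_mem_closure {α β : Type*} [PseudoMetricSpace α]
    [PseudoMetricSpace β] {f : α → β} {s : Set α} {k : ℝ} (hf : ContinuousOn f (closure s))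
    (h : ∀ x ∈ s, ∀ y ∈ s, dist (f x) (f y) ≤ k * dist x y) {x y : α} (hx : x ∈ closure s)
    (hy : y ∈ closure s) : dist (f x) (f y) ≤ k * dist x y := by
  have hmem : (x, y) ∈ closure (s ×ˢ s) := by rw [closure_prod_eq]; exact ⟨hx, hy⟩
  have hsub : s ×ˢ s ⊆ closure s ×ˢ closure s := prod_mono subset_closure subset_closure
  have hdist : ContinuousOn (fun q : α × α => dist (f q.1) (f q.2)) (closure s ×ˢ closure s) :=
    continuous_dist.comp_continuousOn <|
      (hf.comp continuousOn_fst fun _ hq => hq.1).prodMk (hf.comp continuousOn_snd fun _ hq => hq.2)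
  refine ContinuousWithinAt.closure_le hmem ((hdist _ ⟨hx, hy⟩).mono hsub) ?_
    fun q hq => h q.1 hq.1 q.2 hq.2
  exact (continuous_const.mul continuous_dist).continuousWithinAt

theorem lipschitz_of_limsup_slope_le_general (a b k : ℝ) (hab : a < b) (f : ℝ → ℝ)
    (hcont : ContinuousOn f (Set.Icc a b))
    (hslope : ∀ p ∈ Set.Ioo a b, ∀ ε > 0, ∃ δ > 0, ∀ x ∈ Set.Icc a b,
      |x - p| < δ → |f x - f p| ≤ (k + ε) * |x - p|) :
    ∀ x ∈ Set.Icc a b, ∀ y ∈ Set.Icc a b, |f x - f y| ≤ k * |x - y| := by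
  have on_interior : ∀ x ∈ Ioo a b, ∀ y ∈ Ioo a b, dist (f x) (f y) ≤ k * dist x y := by
    have ordered : ∀ x ∈ Ioo a b, ∀ y ∈ Ioo a b, x ≤ y → |f y - f x| ≤ k * (y - x) :=
      fun x hx y hy hxy => abs_sub_le_of_forall_eventually_right_slope_le hxy
        (hcont.mono (Icc_subset_Icc hx.1.le hy.2.le)) fun p hp =>
          have hp' : p ∈ Ioo a b := ⟨hx.1.trans_le hp.1, hp.2.trans hy.2⟩
          eventually_right_slope_le_of_forall_slope_le hp' (hslope p hp')
    intro x hx y hy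
    rw [Real.dist_eq, Real.dist_eq]
    rcases le_total x y with hxy | hyx
    · rw [abs_sub_comm, abs_sub_comm x, abs_of_nonneg (sub_nonneg.2 hxy)]
      exact ordered x hx y hy hxy
    · rw [abs_of_nonneg (sub_nonneg.2 hyx)]
      exact ordered y hy x hx hyx
  intro x hx y hy
  rw [← closure_Ioo hab.ne] at hcont hx hy
  simpa only [Real.dist_eq] using dist_le_mul_dist_of_mem_closure hcont on_interior hx hy

/-- A continuous function on `[a, b]` whose upper pointwise Lipschitz constant is at most `k`
at every interior point is Lipschitz with constant `k` on `[a, b]`. -/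
theorem lipschitz_of_limsup_slope_le (a b k : ℝ) (hab : a < b) (hk : 0 ≤ k) (f : ℝ → ℝ)
    (hcont : ContinuousOn f (Set.Icc a b))
    (hslope : ∀ p ∈ Set.Ioo a b, ∀ ε > 0, ∃ δ > 0, ∀ x ∈ Set.Icc a b,
      |x - p| < δ → |f x - f p| ≤ (k + ε) * |x - p|) :
    ∀ x ∈ Set.Icc a b, ∀ y ∈ Set.Icc a b, |f x - f y| ≤ k * |x - y| :=
  lipschitz_of_limsup_slope_le_general a b k hab f hcont hslope
end

section
/- Let f : [a, b] → ℝ be continuous, let k ≥ 0, and suppose that at every point p ∈ (a, b), limsup_{x → p} |f(x) − f(p)|/|x − p| ≤ k. If r is a real number with |r| > k, then the function g(x) = f(x) + r·x has no local maximum and no local minimum at any point of the open interval (a, b). -/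
/-!
Near `p` the slope of `f` is at most some `c < |r|`, so on the side of `p` pointed to by the
sign of `r` the linear term wins: `f x + r * x - (f p + r * p) ≥ (|r| - c) * |x - p| > 0`.
Hence `p` is not a local maximum, and applying this to `-f` and `-r` it is not a local minimum.
-/

open Filter Topology

section Tilt

variable {f : ℝ → ℝ} {p c r : ℝ}

theorem frequently_lt_add_mul_of_abs_sub_le (hf : ∀ᶠ x in 𝓝 p, |f x - f p| ≤ c * |x - p|)
    (hc : c < |r|) : ∃ᶠ x in 𝓝 p, f p + r * p < f x + r * x := by
  rcases le_or_gt 0 r with hr | hr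
  · rw [abs_of_nonneg hr] at hc
    have hright : ∀ᶠ x in 𝓝[>] p, f p + r * p < f x + r * x := by
      filter_upwards [self_mem_nhdsWithin, nhdsWithin_le_nhds hf] with x (hx : p < x) hfx
      rw [abs_of_pos (sub_pos.2 hx)] at hfx
      have := mul_pos (sub_pos.2 hc) (sub_pos.2 hx)
      linarith [(abs_le.1 hfx).1]
    exact hright.frequently.filter_mono nhdsWithin_le_nhds
  · rw [abs_of_neg hr] at hc
    have hleft : ∀ᶠ x in 𝓝[<] p, f p + r * p < f x + r * x := by
      filter_upwards [self_mem_nhdsWithin, nhdsWithin_le_nhds hf] with x (hx : x < p) hfx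
      rw [abs_of_neg (sub_neg.2 hx)] at hfx
      have := mul_pos (sub_pos.2 hc) (sub_pos.2 hx)
      linarith [(abs_le.1 hfx).1]
    exact hleft.frequently.filter_mono nhdsWithin_le_nhds

theorem not_isLocalMax_add_mul (hf : ∀ᶠ x in 𝓝 p, |f x - f p| ≤ c * |x - p|)
    (hc : c < |r|) : ¬ IsLocalMax (fun x => f x + r * x) p := fun hmax =>
  (frequently_lt_add_mul_of_abs_sub_le hf hc).and_eventually hmax |>.exists.elim
    fun _ hx => hx.1.not_ge hx.2

theorem not_isLocalMin_add_mul (hf : ∀ᶠ x in 𝓝 p, |f x - f p| ≤ c * |x - p|)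
    (hc : c < |r|) : ¬ IsLocalMin (fun x => f x + r * x) p := by
  have hneg : ∀ᶠ x in 𝓝 p, |-f x - -f p| ≤ c * |x - p| := by
    simpa only [neg_sub_neg, abs_sub_comm] using hf
  intro hmin
  refine not_isLocalMax_add_mul (f := fun x => -f x) (r := -r) hneg (by rwa [abs_neg]) ?_
  simpa only [← neg_add, neg_mul] using hmin.neg

end Tilt

theorem no_local_extrema_of_tilt_general (a b k r : ℝ) (hr : k < |r|)
    (f : ℝ → ℝ)
    (hslope : ∀ p ∈ Set.Ioo a b, ∀ ε > 0, ∃ δ > 0, ∀ x ∈ Set.Icc a b,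
      |x - p| < δ → |f x - f p| ≤ (k + ε) * |x - p|) :
    ∀ p ∈ Set.Ioo a b, ¬ IsLocalMaxOn (fun x => f x + r * x) (Set.Icc a b) p ∧
      ¬ IsLocalMinOn (fun x => f x + r * x) (Set.Icc a b) p := by
  intro p hp
  have hIcc : Set.Icc a b ∈ 𝓝 p := Icc_mem_nhds hp.1 hp.2
  obtain ⟨δ, hδ, hδslope⟩ := hslope p hp ((|r| - k) / 2) (by linarith)
  have hf : ∀ᶠ x in 𝓝 p, |f x - f p| ≤ (k + (|r| - k) / 2) * |x - p| := by
    filter_upwards [hIcc, Metric.ball_mem_nhds p hδ] with x hx hxδ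
    exact hδslope x hx (Real.dist_eq x p ▸ hxδ)
  have hc : k + (|r| - k) / 2 < |r| := by linarith
  exact ⟨fun hmax => not_isLocalMax_add_mul hf hc (hmax.isLocalMax hIcc),
    fun hmin => not_isLocalMin_add_mul hf hc (hmin.isLocalMin hIcc)⟩

/-- If `f` is continuous on `[a, b]` with upper pointwise Lipschitz constant at most `k` at
every interior point, and `|r| > k`, then `x ↦ f x + r * x` has no local maximum and no
local minimum at any point of `(a, b)`. -/
theorem no_local_extrema_of_tilt (a b k r : ℝ) (hab : a < b) (hk : 0 ≤ k) (hr : k < |r|)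
    (f : ℝ → ℝ) (hcont : ContinuousOn f (Set.Icc a b))
    (hslope : ∀ p ∈ Set.Ioo a b, ∀ ε > 0, ∃ δ > 0, ∀ x ∈ Set.Icc a b,
      |x - p| < δ → |f x - f p| ≤ (k + ε) * |x - p|) :
    ∀ p ∈ Set.Ioo a b, ¬ IsLocalMaxOn (fun x => f x + r * x) (Set.Icc a b) p ∧
      ¬ IsLocalMinOn (fun x => f x + r * x) (Set.Icc a b) p :=
  no_local_extrema_of_tilt_general a b k r hr f hslope
end

section
/- Let (M, d) be a metric space, let p : [a, b] → M be a 1-Lipschitz map, let f : M → ℝ, and let k ≥ 0. Suppose that at every point q ∈ p([a, b]), limsup_{z → q} |f(z) − f(q)|/d(z, q) ≤ k. Then f ∘ p is Lipschitz with constant k on [a, b]; in particular |f(p(b)) − f(p(a))| ≤ k·(b − a). -/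
/-!
Since `p` is 1-Lipschitz, the slope bound on `f` transfers to `g = f ∘ p`: near every `t`,
`|g u - g t| ≤ (k + ε) |u - t|`. A real function with such local slope bounds on an interval is
globally `k`-Lipschitz there, by comparing `t ↦ |g t - g x|` with the line `t ↦ k (t - x)`
through the one-sided mean value inequality `image_le_of_liminf_slope_right_le_deriv_boundary`.
-/

open Set Filter Topology

theorem continuousWithinAt_of_eventually_dist_le {α β : Type*} [PseudoMetricSpace α]
    [PseudoMetricSpace β] {g : α → β} {s : Set α} {t : α} {C : ℝ}
    (h : ∀ᶠ u in 𝓝[s] t, dist (g u) (g t) ≤ C * dist u t) : ContinuousWithinAt g s t := by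
  refine tendsto_iff_dist_tendsto_zero.2 (squeeze_zero' (.of_forall fun _ ↦ dist_nonneg) h ?_)
  have h0 : Tendsto (fun u ↦ C * dist u t) (𝓝 t) (𝓝 (C * dist t t)) :=
    (tendsto_id.dist tendsto_const_nhds).const_mul C
  simpa using h0.mono_left nhdsWithin_le_nhds

theorem abs_sub_le_mul_of_eventually_Icc {g : ℝ → ℝ} {k x y : ℝ} (hxy : x ≤ y)
    (hg : ∀ t ∈ Icc x y, ∀ ε > 0,
      ∀ᶠ u in 𝓝[Icc x y] t, |g u - g t| ≤ (k + ε) * |u - t|) :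
    |g y - g x| ≤ k * (y - x) := by
  have hcont : ContinuousOn g (Icc x y) := fun t ht ↦
    continuousWithinAt_of_eventually_dist_le (C := k + 1)
      (by simpa [Real.dist_eq] using hg t ht 1 one_pos)
  have hslope_right : ∀ t ∈ Ico x y, ∀ r, k < r →
      ∃ᶠ u in 𝓝[>] t, slope (fun t ↦ |g t - g x|) t u < r := by
    intro t ht r hr
    have hnear : ∀ᶠ u in 𝓝[>] t, |g u - g t| ≤ (k + (r - k) / 2) * |u - t| := by
      rw [← nhdsWithin_Ioo_eq_nhdsGT ht.2]
      exact nhdsWithin_mono t (Ioo_subset_Icc_self.trans (Icc_subset_Icc_left ht.1))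
        (hg t (Ico_subset_Icc_self ht) _ (by linarith))
    refine (hnear.and self_mem_nhdsWithin).mono (fun u ⟨hu, htu⟩ ↦ ?_) |>.frequently
    have htu : 0 < u - t := sub_pos.2 htu
    rw [slope_def_field, div_lt_iff₀ htu]
    calc |g u - g x| - |g t - g x| ≤ |g u - g t| := by
          simpa using abs_sub_abs_le_abs_sub (g u - g x) (g t - g x)
      _ ≤ (k + (r - k) / 2) * (u - t) := by rwa [abs_of_pos htu] at hu
      _ < r * (u - t) := by nlinarith
  have hline : ∀ t ∈ Ico x y, HasDerivWithinAt (fun t ↦ k * (t - x)) k (Ici t) t :=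
    fun t _ ↦ by simpa using ((hasDerivWithinAt_id t (Ici t)).sub_const x).const_mul k
  simpa using image_le_of_liminf_slope_right_le_deriv_boundary (hcont.sub continuousOn_const).abs
    (by simp) (by fun_prop) hline hslope_right ⟨hxy, le_rfl⟩

theorem abs_sub_le_mul_of_eventually {g : ℝ → ℝ} {s : Set ℝ} [s.OrdConnected] {k : ℝ}
    (hg : ∀ t ∈ s, ∀ ε > 0, ∀ᶠ u in 𝓝[s] t, |g u - g t| ≤ (k + ε) * |u - t|) :
    ∀ x ∈ s, ∀ y ∈ s, |g x - g y| ≤ k * |x - y| := by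
  suffices h : ∀ x ∈ s, ∀ y ∈ s, x ≤ y → |g y - g x| ≤ k * (y - x) by
    intro x hx y hy
    rcases le_total x y with hxy | hyx
    · rw [abs_sub_comm, abs_sub_comm x, abs_of_nonneg (sub_nonneg.2 hxy)]
      exact h x hx y hy hxy
    · rw [abs_of_nonneg (sub_nonneg.2 hyx)]
      exact h y hy x hx hyx
  intro x hx y hy hxy
  have hsub : Icc x y ⊆ s := Set.Icc_subset s hx hy
  exact abs_sub_le_mul_of_eventually_Icc hxy fun t ht ε hε ↦
    nhdsWithin_mono t hsub (hg t (hsub ht) ε hε)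

theorem eventually_abs_comp_sub_le {α M : Type*} [PseudoMetricSpace α] [PseudoMetricSpace M]
    {p : α → M} {f : M → ℝ} {s : Set α} {t : α} {c : ℝ}
    (hp : ∀ x ∈ s, ∀ y ∈ s, dist (p x) (p y) ≤ dist x y) (ht : t ∈ s) (hc : 0 ≤ c)
    (hf : ∀ᶠ z in 𝓝 (p t), |f z - f (p t)| ≤ c * dist z (p t)) :
    ∀ᶠ u in 𝓝[s] t, |f (p u) - f (p t)| ≤ c * dist u t := by
  have hpt : ∀ᶠ u in 𝓝[s] t, dist (p u) (p t) ≤ dist u t :=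
    eventually_mem_nhdsWithin.mono fun u hu ↦ hp u hu t ht
  have hcont : ContinuousWithinAt p s t :=
    continuousWithinAt_of_eventually_dist_le (C := 1) (by simpa using hpt)
  filter_upwards [hcont.tendsto.eventually hf, hpt] with u hfu hpu
  exact hfu.trans (mul_le_mul_of_nonneg_left hpu hc)

/-- If `p : [a, b] → M` is a nice (1-Lipschitz) curve and `f : M → ℝ` satisfies
`limsup_{z → q} |f z - f q| / d(z, q) ≤ k` at every point `q ∈ p([a, b])`, then `f ∘ p` is
Lipschitz with constant `k` on `[a, b]`; in particular `|f (p b) - f (p a)| ≤ k * (b - a)`. -/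
theorem lipschitz_along_nice_curve {M : Type*} [MetricSpace M] (a b : ℝ) (hab : a ≤ b)
    (p : ℝ → M)
    (hp : ∀ x ∈ Set.Icc a b, ∀ y ∈ Set.Icc a b, dist (p x) (p y) ≤ |x - y|)
    (f : M → ℝ) (k : ℝ) (hk : 0 ≤ k)
    (hslope : ∀ q ∈ p '' Set.Icc a b, ∀ ε > 0, ∃ δ > 0, ∀ z : M,
      dist z q < δ → |f z - f q| ≤ (k + ε) * dist z q) :
    (∀ x ∈ Set.Icc a b, ∀ y ∈ Set.Icc a b, |f (p x) - f (p y)| ≤ k * |x - y|) ∧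
      |f (p b) - f (p a)| ≤ k * (b - a) := by
  have hlip : ∀ x ∈ Icc a b, ∀ y ∈ Icc a b, |f (p x) - f (p y)| ≤ k * |x - y| := by
    refine abs_sub_le_mul_of_eventually (g := f ∘ p) fun t ht ε hε ↦ ?_
    obtain ⟨δ, hδ, hδf⟩ := hslope (p t) (mem_image_of_mem p ht) ε hε
    simpa [Real.dist_eq] using eventually_abs_comp_sub_le (by simpa [Real.dist_eq] using hp) ht
      (by linarith) (Metric.eventually_nhds_iff.2 ⟨δ, hδ, fun z hz ↦ hδf z hz⟩)
  refine ⟨hlip, ?_⟩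
  simpa [abs_of_nonneg (sub_nonneg.2 hab)] using hlip b ⟨hab, le_rfl⟩ a ⟨le_rfl, hab⟩
end

section
/- Let (M, d) be a metric space, let p : [a, b] → M be a continuous path of finite length ℓ, let f : M → ℝ, and let k ≥ 0. Suppose that limsup_{z → q} |f(z) − f(q)|/d(z, q) ≤ k holds uniformly on p([a, b]): for every ε > 0 there exists δ > 0 such that for every q ∈ p([a, b]) and every z ∈ M with d(z, q) < δ, one has |f(z) − f(q)| ≤ (k + ε)·d(z, q). Then the path f ∘ p : [a, b] → ℝ has finite length at most k·ℓ: for every partition a = x₀ < ⋯ < xₙ = b, Σ_{i=0}^{n−1} |f(p(xᵢ₊₁)) − f(p(xᵢ))| ≤ k·ℓ. -/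
/-!
By uniform continuity of `p`, every short subarc `p([s, t])` has diameter less than the `δ`
attached to `ε`, so `f` is `(k + ε)`-Lipschitz on it. Cutting `[a, b]` into short pieces and
using additivity of the variation gives `Var (f ∘ p) ≤ (k + ε) Var p`, and `Var p ≤ ℓ` because a
monotone sequence in `[a, b]`, extended by `a` and `b` and with repetitions dropped, is an
inscribed polygon. Letting `ε → 0` gives the bound `k ℓ`.
-/

open Set Finset Filter Topology
open scoped NNReal ENNReal

theorem eVariationOn.sum_fin_le {α E : Type*} [LinearOrder α] [PseudoEMetricSpace E]
    {f : α → E} {s : Set α} {n : ℕ} {x : Fin (n + 1) → α} (hx : Monotone x)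
    (hxs : ∀ i, x i ∈ s) :
    ∑ i : Fin n, edist (f (x i.succ)) (f (x i.castSucc)) ≤ eVariationOn f s := by
  set u : ℕ → α := fun i => x ⟨min i n, by omega⟩
  have hu : Monotone u := fun i j hij => hx (Fin.mk_le_mk.2 (min_le_min_right n hij))
  have hux : ∀ i : Fin (n + 1), u i = x i := fun i => congrArg x (Fin.ext (by simp [i.is_le]))
  calc ∑ i : Fin n, edist (f (x i.succ)) (f (x i.castSucc))
      = ∑ i : Fin n, edist (f (u (i + 1))) (f (u i)) := by
        refine Finset.sum_congr rfl fun i _ => ?_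
        rw [← hux i.succ, ← hux i.castSucc, Fin.val_succ, Fin.val_castSucc]
    _ = ∑ i ∈ range n, edist (f (u (i + 1))) (f (u i)) :=
        Fin.sum_univ_eq_sum_range (fun i => edist (f (u (i + 1))) (f (u i))) n
    _ ≤ eVariationOn f s := eVariationOn.sum_le hu fun i => hxs _

theorem eVariationOn.comp_le_of_lipschitzOnWith_image_Icc {M F : Type*} [PseudoEMetricSpace M]
    [PseudoEMetricSpace F] {p : ℝ → M} {f : M → F} {K : ℝ≥0} {a b η : ℝ} (hab : a ≤ b)
    (hη : 0 < η)
    (hf : ∀ s ∈ Icc a b, ∀ t ∈ Icc a b, t - s < η → LipschitzOnWith K f (p '' Icc s t)) :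
    eVariationOn (f ∘ p) (Icc a b) ≤ K * eVariationOn p (Icc a b) := by
  obtain ⟨N, hN⟩ := exists_nat_gt ((b - a) / η)
  have hN0 : (0 : ℝ) < N := (div_nonneg (sub_nonneg.2 hab) hη.le).trans_lt hN
  set I : ℕ → ℝ := fun i => a + i * ((b - a) / N)
  have hI : Monotone I := fun i j hij => by
    have : (0 : ℝ) ≤ (b - a) / N := div_nonneg (sub_nonneg.2 hab) hN0.le
    simp only [I]; gcongr
  have hI0 : I 0 = a := by simp [I]
  have hIN : I N = b := by simp only [I]; field_simp; ring
  have hmem : ∀ i ≤ N, I i ∈ Icc a b := fun i hi => ⟨hI0 ▸ hI (Nat.zero_le i), hIN ▸ hI hi⟩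
  have hstep : ∀ i, I (i + 1) - I i < η := fun i => by
    have hmesh : (b - a) / N < η := by
      rw [div_lt_iff₀ hN0, mul_comm]
      rwa [div_lt_iff₀ hη] at hN
    simp only [I]; push_cast; linarith
  calc eVariationOn (f ∘ p) (Icc a b)
      = ∑ i ∈ range N, eVariationOn (f ∘ p) (Icc (I i) (I (i + 1))) := by
        rw [eVariationOn.sum' _ hI, hI0, hIN]
    _ ≤ ∑ i ∈ range N, K * eVariationOn p (Icc (I i) (I (i + 1))) := by
        refine Finset.sum_le_sum fun i hi => ?_
        have hi := Finset.mem_range.1 hi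
        exact (hf _ (hmem i hi.le) _ (hmem (i + 1) hi) (hstep i)).comp_eVariationOn_le
          (mapsTo_image p _)
    _ = K * eVariationOn p (Icc a b) := by
        rw [← Finset.mul_sum, eVariationOn.sum' _ hI, hI0, hIN]

theorem exists_lipschitzOnWith_image_Icc {M F : Type*} [PseudoMetricSpace M] [PseudoMetricSpace F]
    {p : ℝ → M} {f : M → F} {K : ℝ≥0} {a b δ : ℝ} (hp : ContinuousOn p (Icc a b)) (hδ : 0 < δ)
    (hf : ∀ q ∈ p '' Icc a b, ∀ z, dist z q < δ → dist (f z) (f q) ≤ K * dist z q) :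
    ∃ η > 0, ∀ s ∈ Icc a b, ∀ t ∈ Icc a b, t - s < η → LipschitzOnWith K f (p '' Icc s t) := by
  obtain ⟨η, hη, hpη⟩ :=
    Metric.uniformContinuousOn_iff.1 (isCompact_Icc.uniformContinuousOn_of_continuous hp) δ hδ
  refine ⟨η, hη, fun s hs t ht hst => LipschitzOnWith.of_dist_le_mul ?_⟩
  rintro _ ⟨u, hu, rfl⟩ _ ⟨v, hv, rfl⟩
  have hsub : Icc s t ⊆ Icc a b := Icc_subset_Icc hs.1 ht.2
  exact hf _ (mem_image_of_mem p (hsub hv)) _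
    (hpη u (hsub hu) v (hsub hv) ((Real.dist_le_of_mem_Icc hu hv).trans_lt hst))

theorem eVariationOn_comp_le_of_forall_dist_le_mul {M F : Type*} [PseudoMetricSpace M]
    [PseudoMetricSpace F] {p : ℝ → M} {f : M → F} {K : ℝ≥0} {a b δ : ℝ} (hab : a ≤ b)
    (hp : ContinuousOn p (Icc a b)) (hδ : 0 < δ)
    (hf : ∀ q ∈ p '' Icc a b, ∀ z, dist z q < δ → dist (f z) (f q) ≤ K * dist z q) :
    eVariationOn (f ∘ p) (Icc a b) ≤ K * eVariationOn p (Icc a b) :=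
  let ⟨_, hη, hlip⟩ := exists_lipschitzOnWith_image_Icc hp hδ hf
  eVariationOn.comp_le_of_lipschitzOnWith_image_Icc hab hη hlip

def polygonalLengths {M : Type*} [PseudoMetricSpace M] (p : ℝ → M) (a b : ℝ) : Set ℝ :=
  {s : ℝ | ∃ (n : ℕ) (x : Fin (n + 1) → ℝ), StrictMono x ∧
      x 0 = a ∧ x (Fin.last n) = b ∧
      s = ∑ i : Fin n, dist (p (x i.castSucc)) (p (x i.succ))}

section polygonalLengths

variable {M : Type*} [PseudoMetricSpace M] {p : ℝ → M}

theorem zero_mem_polygonalLengths (a : ℝ) : 0 ∈ polygonalLengths p a a :=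
  ⟨0, fun _ => a, fun i j h => absurd h (by omega), rfl, rfl, by simp⟩

theorem add_dist_mem_polygonalLengths {a b c s : ℝ} (hs : s ∈ polygonalLengths p a b)
    (hbc : b ≤ c) : s + dist (p b) (p c) ∈ polygonalLengths p a c := by
  obtain ⟨n, x, hx, h0, hn, rfl⟩ := hs
  rcases hbc.eq_or_lt with rfl | hbc
  · exact ⟨n, x, hx, h0, hn, by simp⟩
  refine ⟨n + 1, Fin.snoc x c, Fin.strictMono_iff_lt_succ.2 fun i => ?_, ?_, by simp, ?_⟩
  · induction i using Fin.lastCases with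
    | last => rwa [Fin.succ_last, Fin.snoc_last, Fin.snoc_castSucc, hn]
    | cast j => simpa only [Fin.succ_castSucc, Fin.snoc_castSucc] using hx j.castSucc_lt_succ
  · rw [← Fin.castSucc_zero, Fin.snoc_castSucc, h0]
  · simp only [Fin.sum_univ_castSucc (n := n), Fin.succ_castSucc, Fin.snoc_castSucc,
      Fin.succ_last, Fin.snoc_last, hn]

theorem exists_mem_polygonalLengths_ge {a : ℝ} {u : ℕ → ℝ} (hu : Monotone u) (hau : a ≤ u 0) :
    ∀ n, ∃ s ∈ polygonalLengths p a (u n),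
      ∑ i ∈ range n, dist (p (u (i + 1))) (p (u i)) ≤ s
  | 0 => ⟨_, add_dist_mem_polygonalLengths (zero_mem_polygonalLengths a) hau, by simp⟩
  | n + 1 => by
    obtain ⟨s, hs, hle⟩ := exists_mem_polygonalLengths_ge hu hau n
    refine ⟨_, add_dist_mem_polygonalLengths hs (hu n.le_succ), ?_⟩
    rw [Finset.sum_range_succ, dist_comm]
    gcongr

theorem eVariationOn_le_of_mem_upperBounds_polygonalLengths {a b ℓ : ℝ}
    (hℓ : ℓ ∈ upperBounds (polygonalLengths p a b)) :
    eVariationOn p (Icc a b) ≤ ENNReal.ofReal ℓ := by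
  refine iSup_le fun ⟨n, u, hu, hus⟩ => ?_
  obtain ⟨s, hs, hle⟩ := exists_mem_polygonalLengths_ge (p := p) hu (hus 0).1 n
  have hsℓ := hℓ (add_dist_mem_polygonalLengths hs (hus n).2)
  simp only [edist_dist]
  rw [← ENNReal.ofReal_sum_of_nonneg fun _ _ => dist_nonneg]
  exact ENNReal.ofReal_le_ofReal (by linarith [dist_nonneg (x := p (u n)) (y := p b)])

theorem sum_abs_sub_comp_le_of_forall_dist_lt {a b ℓ K δ : ℝ} {f : M → ℝ} {n : ℕ}
    {x : Fin (n + 1) → ℝ} (hp : ContinuousOn p (Icc a b))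
    (hℓ : ℓ ∈ upperBounds (polygonalLengths p a b)) (hK : 0 ≤ K) (hδ : 0 < δ)
    (hf : ∀ q ∈ p '' Icc a b, ∀ z, dist z q < δ → |f z - f q| ≤ K * dist z q)
    (hx : StrictMono x) (h0 : x 0 = a) (hn : x (Fin.last n) = b) :
    ∑ i : Fin n, |f (p (x i.succ)) - f (p (x i.castSucc))| ≤ K * ℓ := by
  have hab : a ≤ b := h0 ▸ hn ▸ hx.monotone (Fin.zero_le _)
  have hxs : ∀ i, x i ∈ Icc a b := fun i =>
    ⟨h0 ▸ hx.monotone (Fin.zero_le i), hn ▸ hx.monotone (Fin.le_last i)⟩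
  have hℓ0 : 0 ≤ ℓ := (Finset.sum_nonneg fun _ _ => dist_nonneg).trans (hℓ ⟨n, x, hx, h0, hn, rfl⟩)
  have hf' : ∀ q ∈ p '' Icc a b, ∀ z, dist z q < δ → dist (f z) (f q) ≤ K.toNNReal * dist z q := by
    simpa only [Real.coe_toNNReal _ hK, Real.dist_eq] using hf
  refine (ENNReal.ofReal_le_ofReal_iff (by positivity)).1 ?_
  calc ENNReal.ofReal (∑ i : Fin n, |f (p (x i.succ)) - f (p (x i.castSucc))|)
      = ∑ i : Fin n, edist ((f ∘ p) (x i.succ)) ((f ∘ p) (x i.castSucc)) := by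
        simp only [ENNReal.ofReal_sum_of_nonneg fun _ _ => abs_nonneg _, Function.comp_apply,
          edist_dist, Real.dist_eq]
    _ ≤ eVariationOn (f ∘ p) (Icc a b) := eVariationOn.sum_fin_le hx.monotone hxs
    _ ≤ K.toNNReal * eVariationOn p (Icc a b) :=
        eVariationOn_comp_le_of_forall_dist_le_mul hab hp hδ hf'
    _ ≤ ENNReal.ofReal K * ENNReal.ofReal ℓ :=
        mul_le_mul_right (eVariationOn_le_of_mem_upperBounds_polygonalLengths hℓ) _
    _ = ENNReal.ofReal (K * ℓ) := (ENNReal.ofReal_mul hK).symm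

end polygonalLengths

theorem length_composition_le_general {M : Type*} [MetricSpace M] (a b : ℝ)
    (p : ℝ → M) (hcont : ContinuousOn p (Set.Icc a b)) (ℓ : ℝ)
    (hlen : IsLUB {s : ℝ | ∃ (n : ℕ) (x : Fin (n + 1) → ℝ), StrictMono x ∧
      x 0 = a ∧ x (Fin.last n) = b ∧
      s = ∑ i : Fin n, dist (p (x i.castSucc)) (p (x i.succ))} ℓ)
    (f : M → ℝ) (k : ℝ) (hk : 0 ≤ k)
    (hslope : ∀ ε > 0, ∃ δ > 0, ∀ q ∈ p '' Set.Icc a b, ∀ z : M,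
      dist z q < δ → |f z - f q| ≤ (k + ε) * dist z q) :
    ∀ (n : ℕ) (x : Fin (n + 1) → ℝ), StrictMono x → x 0 = a → x (Fin.last n) = b →
      ∑ i : Fin n, |f (p (x i.succ)) - f (p (x i.castSucc))| ≤ k * ℓ := by
  intro n x hx h0 hn
  have key : ∀ ε > 0, ∑ i : Fin n, |f (p (x i.succ)) - f (p (x i.castSucc))| ≤ (k + ε) * ℓ :=
    fun ε hε =>
      let ⟨_, hδ, hf⟩ := hslope ε hε
      sum_abs_sub_comp_le_of_forall_dist_lt hcont hlen.1 (by positivity) hδ hf hx h0 hn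
  have hlim : Tendsto (fun ε => (k + ε) * ℓ) (𝓝[>] 0) (𝓝 (k * ℓ)) := by
    refine ((show Continuous fun ε : ℝ => (k + ε) * ℓ by fun_prop).tendsto' 0 _ ?_).mono_left
      nhdsWithin_le_nhds
    simp
  exact ge_of_tendsto hlim (eventually_nhdsWithin_of_forall key)

/-- If `p : [a, b] → M` is a continuous path of finite length `ℓ` and `f : M → ℝ` satisfies
`limsup_{z → q} |f z - f q| / d(z, q) ≤ k` uniformly on `p([a, b])`, then `f ∘ p` has length
at most `k * ℓ`. -/
theorem length_composition_le {M : Type*} [MetricSpace M] (a b : ℝ) (hab : a ≤ b)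
    (p : ℝ → M) (hcont : ContinuousOn p (Set.Icc a b)) (ℓ : ℝ)
    (hlen : IsLUB {s : ℝ | ∃ (n : ℕ) (x : Fin (n + 1) → ℝ), StrictMono x ∧
      x 0 = a ∧ x (Fin.last n) = b ∧
      s = ∑ i : Fin n, dist (p (x i.castSucc)) (p (x i.succ))} ℓ)
    (f : M → ℝ) (k : ℝ) (hk : 0 ≤ k)
    (hslope : ∀ ε > 0, ∃ δ > 0, ∀ q ∈ p '' Set.Icc a b, ∀ z : M,
      dist z q < δ → |f z - f q| ≤ (k + ε) * dist z q) :
    ∀ (n : ℕ) (x : Fin (n + 1) → ℝ), StrictMono x → x 0 = a → x (Fin.last n) = b →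
      ∑ i : Fin n, |f (p (x i.succ)) - f (p (x i.castSucc))| ≤ k * ℓ :=
  length_composition_le_general a b p hcont ℓ hlen f k hk hslope
end

section
/- Let (M, d) be a metric space and let L ≥ 1 be a real number such that for every x, y ∈ M there exist real numbers a ≤ b with b − a ≤ L·d(x, y) and a 1-Lipschitz map p : [a, b] → M with p(a) = x and p(b) = y. Let f : M → ℝ and k ≥ 0, and suppose that at every point q ∈ M, limsup_{z → q} |f(z) − f(q)|/d(z, q) ≤ k. Then f is Lipschitz with constant k·L on M: |f(x) − f(y)| ≤ k·L·d(x, y) for all x, y ∈ M. -/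
/-!
Along a quasiconvexity path `p : [a, b] → M` from `x` to `y`, the composite `g = f ∘ p`
satisfies `|g s - g t| ≤ (k + ε) (s - t)` for `s` slightly to the right of `t`, since `p` is
1-Lipschitz. So the upper right Dini derivative of `|g - g a|` is at most `k`, and the comparison
principle for Dini derivatives gives `|g b - g a| ≤ k (b - a) ≤ k L d(x, y)`.
-/

open Set Filter Topology

theorem abs_sub_le_mul_of_eventually_abs_sub_le_nhdsGT {g : ℝ → ℝ} {a b k : ℝ} (hab : a ≤ b)
    (hg : ContinuousOn g (Icc a b))
    (hslope : ∀ t ∈ Ico a b, ∀ r > k, ∀ᶠ s in 𝓝[>] t, |g s - g t| ≤ r * (s - t)) :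
    |g b - g a| ≤ k * (b - a) := by
  refine image_le_of_liminf_slope_right_le_deriv_boundary (f := fun t => |g t - g a|)
    (B := fun t => k * (t - a)) (B' := fun _ => k) (by fun_prop) (by simp) (by fun_prop)
    (fun t _ => ((hasDerivAt_id t).sub_const a).const_mul k |>.hasDerivWithinAt |>.congr_deriv
      (mul_one k)) ?_ (right_mem_Icc.2 hab)
  intro t ht r hr
  refine (((hslope t ht ((k + r) / 2) (by linarith)).and self_mem_nhdsWithin).mono ?_).frequently
  rintro s ⟨hs, hts : t < s⟩
  calc slope (fun t => |g t - g a|) t s ≤ |g s - g t| / (s - t) := by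
        rw [slope_def_field]
        gcongr
        simpa using abs_sub_abs_le_abs_sub (g s - g a) (g t - g a)
    _ ≤ (k + r) / 2 := by rwa [div_le_iff₀ (by linarith)]
    _ < r := by linarith

theorem continuousAt_of_eventually_abs_sub_le_mul_dist {M : Type*} [PseudoMetricSpace M]
    {f : M → ℝ} {q : M} {C : ℝ} (h : ∀ᶠ z in 𝓝 q, |f z - f q| ≤ C * dist z q) :
    ContinuousAt f q := by
  rw [ContinuousAt, tendsto_iff_dist_tendsto_zero]
  refine squeeze_zero' (Eventually.of_forall fun _ => dist_nonneg)
    (h.mono fun z hz => (Real.dist_eq _ _).trans_le hz) ?_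
  simpa using ((continuous_id.dist (continuous_const (y := q))).tendsto q).const_mul C

theorem abs_sub_le_mul_of_lipschitzOnWith_one {M : Type*} [PseudoMetricSpace M] {f : M → ℝ}
    {k : ℝ} (hk : 0 ≤ k) (hf : ∀ q, ∀ ε > 0, ∀ᶠ z in 𝓝 q, |f z - f q| ≤ (k + ε) * dist z q)
    {p : ℝ → M} {a b : ℝ} (hab : a ≤ b) (hp : LipschitzOnWith 1 p (Icc a b)) :
    |f (p b) - f (p a)| ≤ k * (b - a) := by
  have hf_cont : Continuous f := continuous_iff_continuousAt.2 fun q =>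
    continuousAt_of_eventually_abs_sub_le_mul_dist (hf q 1 one_pos)
  refine abs_sub_le_mul_of_eventually_abs_sub_le_nhdsGT hab
    (hf_cont.comp_continuousOn hp.continuousOn) fun t ht r hr => ?_
  have hp_t : Tendsto p (𝓝[>] t) (𝓝 (p t)) := by
    rw [← nhdsWithin_Ioo_eq_nhdsGT ht.2]
    exact (hp.continuousOn t (Ico_subset_Icc_self ht)).mono (Ioo_subset_Icc_self.trans
      (Icc_subset_Icc_left ht.1))
  filter_upwards [hp_t.eventually (hf (p t) (r - k) (by linarith)),
    Ioo_mem_nhdsGT ht.2] with s hs hts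
  have hdist : dist (p s) (p t) ≤ s - t := by
    simpa [Real.dist_eq, abs_of_pos (sub_pos.2 hts.1)] using
      hp.dist_le_mul s ⟨ht.1.trans hts.1.le, hts.2.le⟩ t (Ico_subset_Icc_self ht)
  calc |f (p s) - f (p t)| ≤ r * dist (p s) (p t) := by simpa using hs
    _ ≤ r * (s - t) := by gcongr; linarith

theorem lipschitz_of_quasiconvex_general {M : Type*} [MetricSpace M] (L : ℝ)
    (hqc : ∀ x y : M, ∃ (a b : ℝ) (p : ℝ → M), a ≤ b ∧ b - a ≤ L * dist x y ∧
      (∀ s ∈ Set.Icc a b, ∀ u ∈ Set.Icc a b, dist (p s) (p u) ≤ |s - u|) ∧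
      p a = x ∧ p b = y)
    (f : M → ℝ) (k : ℝ) (hk : 0 ≤ k)
    (hslope : ∀ q : M, ∀ ε > 0, ∃ δ > 0, ∀ z : M,
      dist z q < δ → |f z - f q| ≤ (k + ε) * dist z q) :
    ∀ x y : M, |f x - f y| ≤ k * L * dist x y := by
  intro x y
  obtain ⟨a, b, p, hab, hba, hp, rfl, rfl⟩ := hqc x y
  have hp_lip : LipschitzOnWith 1 p (Icc a b) :=
    LipschitzOnWith.of_dist_le_mul fun s hs u hu => by simpa [Real.dist_eq] using hp s hs u hu
  have hf : ∀ q, ∀ ε > 0, ∀ᶠ z in 𝓝 q, |f z - f q| ≤ (k + ε) * dist z q := fun q ε hε =>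
    Metric.eventually_nhds_iff.2 <| (hslope q ε hε).imp fun δ ⟨hδ, h⟩ => ⟨hδ, fun z => h z⟩
  calc |f (p a) - f (p b)| = |f (p b) - f (p a)| := abs_sub_comm _ _
    _ ≤ k * (b - a) := abs_sub_le_mul_of_lipschitzOnWith_one hk hf hab hp_lip
    _ ≤ k * (L * dist (p a) (p b)) := mul_le_mul_of_nonneg_left hba hk
    _ = k * L * dist (p a) (p b) := (mul_assoc _ _ _).symm

/-- In an `L`-quasiconvex metric space, a function whose upper pointwise Lipschitz constant
is at most `k` at every point is Lipschitz with constant `k * L`. -/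
theorem lipschitz_of_quasiconvex {M : Type*} [MetricSpace M] (L : ℝ) (hL : 1 ≤ L)
    (hqc : ∀ x y : M, ∃ (a b : ℝ) (p : ℝ → M), a ≤ b ∧ b - a ≤ L * dist x y ∧
      (∀ s ∈ Set.Icc a b, ∀ u ∈ Set.Icc a b, dist (p s) (p u) ≤ |s - u|) ∧
      p a = x ∧ p b = y)
    (f : M → ℝ) (k : ℝ) (hk : 0 ≤ k)
    (hslope : ∀ q : M, ∀ ε > 0, ∃ δ > 0, ∀ z : M,
      dist z q < δ → |f z - f q| ≤ (k + ε) * dist z q) :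
    ∀ x y : M, |f x - f y| ≤ k * L * dist x y :=
  lipschitz_of_quasiconvex_general L hqc f k hk hslope
end

section
/- Let (M, d) be a metric space and let L ≥ 1 be a real number such that for every x, y ∈ M there exist real numbers a ≤ b with b − a ≤ L·d(x, y) and a 1-Lipschitz map p : [a, b] → M with p(a) = x and p(b) = y. Let f : M → ℝ and suppose that f has gradient zero at every point q ∈ M, i.e. lim_{z → q} |f(z) − f(q)|/d(z, q) = 0. Then f is constant on M. -/
/-!
Composing `f` with a Lipschitz path `p` turns "gradient zero at every point" into
"derivative zero at every point" for the real function `f ∘ p` on an interval, so `f ∘ p` is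
constant by the mean value inequality. Quasiconvexity supplies such a path between any two points.
-/

open Filter Set Topology

def HasZeroGradientAt {M : Type*} [PseudoMetricSpace M] (f : M → ℝ) (q : M) : Prop :=
  ∀ ε > 0, ∃ δ > 0, ∀ z : M, 0 < dist z q → dist z q < δ → |f z - f q| ≤ ε * dist z q

namespace HasZeroGradientAt

variable {M : Type*} [MetricSpace M] {f : M → ℝ} {q : M}

theorem eventually_abs_sub_le (hf : HasZeroGradientAt f q) {ε : ℝ} (hε : 0 < ε) :
    ∀ᶠ z in 𝓝 q, |f z - f q| ≤ ε * dist z q := by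
  obtain ⟨δ, hδ, hbound⟩ := hf ε hε
  filter_upwards [Metric.ball_mem_nhds q hδ] with z hz
  rcases (dist_nonneg (x := z) (y := q)).eq_or_lt with hzq | hzq
  · rw [dist_eq_zero.mp hzq.symm]
    simp
  · exact hbound z hzq hz

theorem hasDerivWithinAt_comp {p : ℝ → M} {K : NNReal} {s : Set ℝ} {t : ℝ}
    (hf : HasZeroGradientAt f (p t)) (hp : LipschitzOnWith K p s) (ht : t ∈ s) :
    HasDerivWithinAt (f ∘ p) 0 s t := by
  rw [hasDerivWithinAt_iff_isLittleO]
  simp only [smul_zero, sub_zero, Function.comp_apply]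
  refine Asymptotics.IsLittleO.of_bound fun c hc => ?_
  have hε : 0 < c / (K + 1) := by positivity
  filter_upwards [(hp.continuousOn t ht).eventually (hf.eventually_abs_sub_le hε),
    self_mem_nhdsWithin] with u hfu hu
  calc ‖f (p u) - f (p t)‖ ≤ c / (K + 1) * dist (p u) (p t) := hfu
    _ ≤ c / (K + 1) * (K * dist u t) := by gcongr; exact hp.dist_le_mul u hu t ht
    _ ≤ c / (K + 1) * ((K + 1) * dist u t) := by gcongr; linarith
    _ = c * ‖u - t‖ := by field_simp; rfl

end HasZeroGradientAt

theorem Convex.comp_eq_of_hasZeroGradientAt {M : Type*} [MetricSpace M] {f : M → ℝ}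
    {p : ℝ → M} {K : NNReal} {s : Set ℝ} (hs : Convex ℝ s)
    (hf : ∀ t ∈ s, HasZeroGradientAt f (p t)) (hp : LipschitzOnWith K p s) {x y : ℝ}
    (hx : x ∈ s) (hy : y ∈ s) : f (p x) = f (p y) := by
  have := hs.norm_image_sub_le_of_norm_hasDerivWithin_le
    (fun t ht => (hf t ht).hasDerivWithinAt_comp hp ht) (fun _ _ => norm_zero.le) hx hy
  simpa [sub_eq_zero, eq_comm] using this

theorem constant_of_quasiconvex_gradient_zero_general {M : Type*} [MetricSpace M] (L : ℝ)
    (hqc : ∀ x y : M, ∃ (a b : ℝ) (p : ℝ → M), a ≤ b ∧ b - a ≤ L * dist x y ∧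
      (∀ s ∈ Set.Icc a b, ∀ u ∈ Set.Icc a b, dist (p s) (p u) ≤ |s - u|) ∧
      p a = x ∧ p b = y)
    (f : M → ℝ)
    (hgrad : ∀ q : M, ∀ ε > 0, ∃ δ > 0, ∀ z : M,
      0 < dist z q → dist z q < δ → |f z - f q| ≤ ε * dist z q) :
    ∀ x y : M, f x = f y := by
  intro x y
  obtain ⟨a, b, p, hab, -, hp, rfl, rfl⟩ := hqc x y
  have hlip : LipschitzOnWith 1 p (Icc a b) :=
    LipschitzOnWith.of_dist_le_mul fun s hs u hu => by
      simpa [Real.dist_eq] using hp s hs u hu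
  exact (convex_Icc a b).comp_eq_of_hasZeroGradientAt (fun t _ => hgrad (p t)) hlip
    (left_mem_Icc.mpr hab) (right_mem_Icc.mpr hab)

/-- In an `L`-quasiconvex metric space, a function with gradient zero at every point is
constant. -/
theorem constant_of_quasiconvex_gradient_zero {M : Type*} [MetricSpace M] (L : ℝ)
    (hL : 1 ≤ L)
    (hqc : ∀ x y : M, ∃ (a b : ℝ) (p : ℝ → M), a ≤ b ∧ b - a ≤ L * dist x y ∧
      (∀ s ∈ Set.Icc a b, ∀ u ∈ Set.Icc a b, dist (p s) (p u) ≤ |s - u|) ∧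
      p a = x ∧ p b = y)
    (f : M → ℝ)
    (hgrad : ∀ q : M, ∀ ε > 0, ∃ δ > 0, ∀ z : M,
      0 < dist z q → dist z q < δ → |f z - f q| ≤ ε * dist z q) :
    ∀ x y : M, f x = f y :=
  constant_of_quasiconvex_gradient_zero_general L hqc f hgrad
end
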